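/- arXiv:2109.06608 — 12 statements merged into one kernel-verified Lean document; each statement's English description precedes it below -/
import Mathlib

section
/- If a financial system is acyclic (its auxiliary graph contains no directed cycle) and all its external assets and notionals are rational numbers, then every clearing vector of the system has all coordinates rational. -/
open Finset

/-- The liability of bank `i` to bank `j` under recovery-rate vector `r`. -/
def liab {n : ℕ} (c : Fin n → Fin n → ℝ) (cds : Fin n → Fin n → Fin n → ℝ)
    (r : Fin n → ℝ) (i j : Fin n) : ℝ :=
  c i j + ∑ R : Fin n, (1 - r R) * cds i j R

/-- The total liability of bank `i` under recovery-rate vector `r`. -/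
def totLiab {n : ℕ} (c : Fin n → Fin n → ℝ) (cds : Fin n → Fin n → Fin n → ℝ)
    (r : Fin n → ℝ) (i : Fin n) : ℝ :=
  ∑ j : Fin n, liab c cds r i j

/-- The assets of bank `i` under recovery-rate vector `r`
(external assets plus incoming payments `p j i r = r j * liab c cds r j i`). -/
def assets {n : ℕ} (e : Fin n → ℝ) (c : Fin n → Fin n → ℝ)
    (cds : Fin n → Fin n → Fin n → ℝ) (r : Fin n → ℝ) (i : Fin n) : ℝ :=
  e i + ∑ j : Fin n, r j * liab c cds r j i

/-- `r` is a clearing recovery-rate vector. -/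
def IsClearing {n : ℕ} (e : Fin n → ℝ) (c : Fin n → Fin n → ℝ)
    (cds : Fin n → Fin n → Fin n → ℝ) (r : Fin n → ℝ) : Prop :=
  (∀ i, 0 ≤ r i ∧ r i ≤ 1) ∧
  ∀ i, (0 < totLiab c cds r i →
          r i = min 1 (assets e c cds r i / totLiab c cds r i)) ∧
       (totLiab c cds r i = 0 → r i = 1)

/-- `(e, c, cds)` is a financial system. -/
def IsFinSys {n : ℕ} (e : Fin n → ℝ) (c : Fin n → Fin n → ℝ)
    (cds : Fin n → Fin n → Fin n → ℝ) : Prop :=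
  (∀ i, 0 ≤ e i) ∧ (∀ i j, 0 ≤ c i j) ∧ (∀ i, c i i = 0) ∧
  (∀ i j R, 0 ≤ cds i j R) ∧
  (∀ i j R, ¬(i ≠ j ∧ i ≠ R ∧ j ≠ R) → cds i j R = 0)

/-- Arc relation of the auxiliary graph: a blue arc `(u,v)` when `c u v > 0`,
an orange arc `(u,v)` when `cds u v R > 0` for some `R`, and
a red arc `(u,v)` when `v` is the debtor of a CDS with reference bank `u`. -/
def AuxAdj {n : ℕ} (c : Fin n → Fin n → ℝ) (cds : Fin n → Fin n → Fin n → ℝ)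
    (u v : Fin n) : Prop :=
  0 < c u v ∨ (∃ R, 0 < cds u v R) ∨ (∃ j, 0 < cds v j u)

/-- The auxiliary graph contains no directed cycle. -/
def AuxAcyclic {n : ℕ} (c : Fin n → Fin n → ℝ)
    (cds : Fin n → Fin n → Fin n → ℝ) : Prop :=
  ∀ i : Fin n, ¬ Relation.TransGen (AuxAdj c cds) i i

/-!
The clearing conditions express `r i` as `1` or as `assets / totLiab`, and these two quantities are
field expressions in the data and in `r k` for banks `k` with an arc into `i` (blue or orange
arcs carry payments, red arcs carry the CDS reference rates), or one arc further up for the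
recovery rates inside incoming liabilities. Acyclicity makes the ancestor relation well founded,
so induction along it shows that `r` lies in every subfield of `ℝ` containing the data, in
particular in `ℚ`.
-/

open Relation

variable {n : ℕ} {e : Fin n → ℝ} {c : Fin n → Fin n → ℝ} {cds : Fin n → Fin n → Fin n → ℝ}
  {r : Fin n → ℝ} {K : Subfield ℝ}

theorem mem_fieldRange_algebraMap_rat_iff {x : ℝ} :
    x ∈ (algebraMap ℚ ℝ).fieldRange ↔ ∃ q : ℚ, x = q := by
  simp [eq_comm]

theorem totLiab_nonneg (hc0 : ∀ i j, 0 ≤ c i j) (hcds0 : ∀ i j R, 0 ≤ cds i j R)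
    (hr : ∀ R, r R ≤ 1) (i : Fin n) : 0 ≤ totLiab c cds r i :=
  sum_nonneg fun j _ => add_nonneg (hc0 i j) <| sum_nonneg fun R _ =>
    mul_nonneg (sub_nonneg.2 (hr R)) (hcds0 i j R)

theorem IsClearing.eq_one_or_eq_div (hc0 : ∀ i j, 0 ≤ c i j) (hcds0 : ∀ i j R, 0 ≤ cds i j R)
    (hr : IsClearing e c cds r) (i : Fin n) :
    r i = 1 ∨ r i = assets e c cds r i / totLiab c cds r i := by
  rcases (totLiab_nonneg hc0 hcds0 (fun R => (hr.1 R).2) i).eq_or_lt with h | h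
  · exact Or.inl ((hr.2 i).2 h.symm)
  · rw [(hr.2 i).1 h]
    exact min_choice _ _

theorem auxAdj_of_cds_ne_zero (hcds0 : ∀ i j R, 0 ≤ cds i j R) {i j R : Fin n}
    (h : cds i j R ≠ 0) : AuxAdj c cds R i :=
  Or.inr <| Or.inr ⟨j, (hcds0 i j R).lt_of_ne' h⟩

theorem auxAdj_of_liab_ne_zero (hc0 : ∀ i j, 0 ≤ c i j) (hcds0 : ∀ i j R, 0 ≤ cds i j R)
    {i j : Fin n} (h : liab c cds r i j ≠ 0) : AuxAdj c cds i j := by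
  by_contra hn
  simp only [AuxAdj, not_or, not_exists, not_lt] at hn
  obtain ⟨hc, hcds, -⟩ := hn
  apply h
  simp [liab, le_antisymm hc (hc0 i j), fun R => le_antisymm (hcds R) (hcds0 i j R)]

theorem liab_mem (hc : ∀ i j, c i j ∈ K) (hcds : ∀ i j R, cds i j R ∈ K) {i j : Fin n}
    (hr : ∀ R, cds i j R ≠ 0 → r R ∈ K) : liab c cds r i j ∈ K :=
  add_mem (hc i j) <| sum_mem fun R _ => by
    by_cases h : cds i j R = 0
    · simp [h]
    · exact mul_mem (sub_mem (one_mem K) (hr R h)) (hcds i j R)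

theorem IsClearing.mem_of_forall_transGen_mem (hc0 : ∀ i j, 0 ≤ c i j)
    (hcds0 : ∀ i j R, 0 ≤ cds i j R) (hr : IsClearing e c cds r) (he : ∀ i, e i ∈ K)
    (hc : ∀ i j, c i j ∈ K) (hcds : ∀ i j R, cds i j R ∈ K) {i : Fin n}
    (hanc : ∀ k, TransGen (AuxAdj c cds) k i → r k ∈ K) : r i ∈ K := by
  have hL : totLiab c cds r i ∈ K := sum_mem fun j _ =>
    liab_mem hc hcds fun R h => hanc R (.single (auxAdj_of_cds_ne_zero hcds0 h))
  have hA : assets e c cds r i ∈ K := add_mem (he i) <| sum_mem fun j _ => by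
    by_cases h : liab c cds r j i = 0
    · simp [h]
    · have hji := auxAdj_of_liab_ne_zero hc0 hcds0 h
      exact mul_mem (hanc j (.single hji)) <| liab_mem hc hcds fun R hR =>
        hanc R (.head (auxAdj_of_cds_ne_zero hcds0 hR) (.single hji))
  rcases hr.eq_one_or_eq_div hc0 hcds0 i with h | h <;> rw [h]
  exacts [one_mem K, div_mem hA hL]

theorem AuxAcyclic.wellFounded (hac : AuxAcyclic c cds) :
    WellFounded (TransGen (AuxAdj c cds)) :=
  have : Std.Irrefl (TransGen (AuxAdj c cds)) := ⟨hac⟩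
  Finite.wellFounded_of_trans_of_irrefl _

theorem IsClearing.mem_of_auxAcyclic (hc0 : ∀ i j, 0 ≤ c i j)
    (hcds0 : ∀ i j R, 0 ≤ cds i j R) (hac : AuxAcyclic c cds) (hr : IsClearing e c cds r)
    (he : ∀ i, e i ∈ K) (hc : ∀ i j, c i j ∈ K) (hcds : ∀ i j R, cds i j R ∈ K) (i : Fin n) :
    r i ∈ K := by
  induction i using hac.wellFounded.induction with
  | _ i ih => exact hr.mem_of_forall_transGen_mem hc0 hcds0 he hc hcds ih

/-- In an acyclic financial system with rational data, every clearing vector is rational. -/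
theorem acyclic_clearing_rational {n : ℕ} (e : Fin n → ℝ) (c : Fin n → Fin n → ℝ)
    (cds : Fin n → Fin n → Fin n → ℝ) (hfs : IsFinSys e c cds)
    (hac : AuxAcyclic c cds)
    (he : ∀ i, ∃ q : ℚ, e i = q)
    (hc : ∀ i j, ∃ q : ℚ, c i j = q)
    (hcds : ∀ i j R, ∃ q : ℚ, cds i j R = q) :
    ∀ r : Fin n → ℝ, IsClearing e c cds r → ∀ i, ∃ q : ℚ, r i = q := by
  intro r hr i
  simp only [← mem_fieldRange_algebraMap_rat_iff] at he hc hcds ⊢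
  exact hr.mem_of_auxAcyclic hfs.2.1 hfs.2.2.2.1 hac he hc hcds i
end

section
/- Every acyclic financial system (one whose auxiliary graph contains no directed cycle) has exactly one clearing vector: the recovery rate of each bank is uniquely determined by the recovery rates of the banks preceding it in a topological order of the auxiliary graph. -/
open Finset

section Aux

attribute [local instance] Classical.propDecidable

variable {n : ℕ} (e : Fin n → ℝ) (c : Fin n → Fin n → ℝ) (cds : Fin n → Fin n → Fin n → ℝ)

lemma liab_nonneg (hfs : IsFinSys e c cds) (r : Fin n → ℝ) (i j : Fin n)
    (h : ∀ R, 0 < cds i j R → r R ≤ 1) : 0 ≤ liab c cds r i j := by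
  unfold liab
  refine add_nonneg (hfs.2.1 i j) (Finset.sum_nonneg fun R _ => ?_)
  rcases (hfs.2.2.2.1 i j R).lt_or_eq with hR | hR
  · exact mul_nonneg (by linarith [h R hR]) hR.le
  · rw [← hR]; simp

lemma totLiab_nonneg_s2 (hfs : IsFinSys e c cds) (r : Fin n → ℝ) (i : Fin n)
    (h : ∀ k, Relation.TransGen (AuxAdj c cds) k i → r k ≤ 1) :
    0 ≤ totLiab c cds r i := by
  refine Finset.sum_nonneg fun j _ => liab_nonneg e c cds hfs r i j fun R hR => ?_
  exact h R (Relation.TransGen.single (Or.inr (Or.inr ⟨j, hR⟩)))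

lemma assets_nonneg (hfs : IsFinSys e c cds) (r : Fin n → ℝ) (i : Fin n)
    (h : ∀ k, Relation.TransGen (AuxAdj c cds) k i → 0 ≤ r k ∧ r k ≤ 1) :
    0 ≤ assets e c cds r i := by
  refine add_nonneg (hfs.1 i) (Finset.sum_nonneg fun j _ => ?_)
  by_cases hj : AuxAdj c cds j i
  · refine mul_nonneg (h j (Relation.TransGen.single hj)).1
      (liab_nonneg e c cds hfs r j i fun R hR => ?_)
    exact (h R (Relation.TransGen.head (Or.inr (Or.inr ⟨i, hR⟩))
      (Relation.TransGen.single (Or.inr (Or.inl ⟨R, hR⟩))))).2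
  · have hc : c j i = 0 := by
      rcases (hfs.2.1 j i).lt_or_eq with h1 | h1
      · exact absurd (Or.inl h1) hj
      · exact h1.symm
    have hcds : ∀ R, cds j i R = 0 := fun R => by
      rcases (hfs.2.2.2.1 j i R).lt_or_eq with h1 | h1
      · exact absurd (Or.inr (Or.inl ⟨R, h1⟩)) hj
      · exact h1.symm
    simp [liab, hc, hcds]

lemma totLiab_congr (hfs : IsFinSys e c cds) (r r' : Fin n → ℝ) (i : Fin n)
    (h : ∀ k, Relation.TransGen (AuxAdj c cds) k i → r k = r' k) :
    totLiab c cds r i = totLiab c cds r' i := by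
  unfold totLiab liab
  refine Finset.sum_congr rfl fun j _ => ?_
  congr 1
  refine Finset.sum_congr rfl fun R _ => ?_
  rcases (hfs.2.2.2.1 i j R).lt_or_eq with hR | hR
  · rw [h R (Relation.TransGen.single (Or.inr (Or.inr ⟨j, hR⟩)))]
  · rw [← hR]; simp

lemma assets_congr (hfs : IsFinSys e c cds) (r r' : Fin n → ℝ) (i : Fin n)
    (h : ∀ k, Relation.TransGen (AuxAdj c cds) k i → r k = r' k) :
    assets e c cds r i = assets e c cds r' i := by
  unfold assets liab
  congr 1
  refine Finset.sum_congr rfl fun j _ => ?_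
  by_cases hj : AuxAdj c cds j i
  · rw [h j (Relation.TransGen.single hj)]
    congr 1
    congr 1
    refine Finset.sum_congr rfl fun R _ => ?_
    rcases (hfs.2.2.2.1 j i R).lt_or_eq with hR | hR
    · rw [h R (Relation.TransGen.head (Or.inr (Or.inr ⟨i, hR⟩))
        (Relation.TransGen.single (Or.inr (Or.inl ⟨R, hR⟩))))]
    · rw [← hR]; simp
  · have hc : c j i = 0 := by
      rcases (hfs.2.1 j i).lt_or_eq with h1 | h1
      · exact absurd (Or.inl h1) hj
      · exact h1.symm
    have hcds : ∀ R, cds j i R = 0 := fun R => by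
      rcases (hfs.2.2.2.1 j i R).lt_or_eq with h1 | h1
      · exact absurd (Or.inr (Or.inl ⟨R, h1⟩)) hj
      · exact h1.symm
    simp [hc, hcds]

/-- The candidate clearing vector, defined by well-founded recursion. -/
noncomputable def solR (hwf : WellFounded (Relation.TransGen (AuxAdj c cds))) :
    Fin n → ℝ :=
  hwf.fix fun i g =>
    let r0 : Fin n → ℝ := fun k =>
      if h : Relation.TransGen (AuxAdj c cds) k i then g k h else 1
    if totLiab c cds r0 i = 0 then 1
    else min 1 (assets e c cds r0 i / totLiab c cds r0 i)

lemma solR_spec (hfs : IsFinSys e c cds)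
    (hwf : WellFounded (Relation.TransGen (AuxAdj c cds))) (i : Fin n) :
    solR e c cds hwf i =
      if totLiab c cds (solR e c cds hwf) i = 0 then 1
      else min 1 (assets e c cds (solR e c cds hwf) i /
        totLiab c cds (solR e c cds hwf) i) := by
  have hfix := hwf.fix_eq (fun i g =>
    let r0 : Fin n → ℝ := fun k =>
      if h : Relation.TransGen (AuxAdj c cds) k i then g k h else 1
    if totLiab c cds r0 i = 0 then 1
    else min 1 (assets e c cds r0 i / totLiab c cds r0 i)) i
  set r0 : Fin n → ℝ := fun k =>
    if _h : Relation.TransGen (AuxAdj c cds) k i then solR e c cds hwf k else 1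
    with hr0
  have hagree : ∀ k, Relation.TransGen (AuxAdj c cds) k i →
      r0 k = solR e c cds hwf k := by
    intro k hk
    simp [hr0, hk]
  have h1 : totLiab c cds r0 i = totLiab c cds (solR e c cds hwf) i :=
    totLiab_congr e c cds hfs _ _ i hagree
  have h2 : assets e c cds r0 i = assets e c cds (solR e c cds hwf) i :=
    assets_congr e c cds hfs _ _ i hagree
  calc solR e c cds hwf i
      = if totLiab c cds r0 i = 0 then 1
        else min 1 (assets e c cds r0 i / totLiab c cds r0 i) := hfix
    _ = _ := by rw [h1, h2]

lemma solR_bounds (hfs : IsFinSys e c cds)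
    (hwf : WellFounded (Relation.TransGen (AuxAdj c cds))) :
    ∀ i, 0 ≤ solR e c cds hwf i ∧ solR e c cds hwf i ≤ 1 := fun i =>
  hwf.induction (C := fun i => 0 ≤ solR e c cds hwf i ∧ solR e c cds hwf i ≤ 1) i (by
    intro i IH
    rw [solR_spec e c cds hfs hwf i]
    split_ifs with hL
    · exact ⟨zero_le_one, le_refl 1⟩
    · have hL0 : 0 ≤ totLiab c cds (solR e c cds hwf) i :=
        totLiab_nonneg_s2 e c cds hfs _ i fun k hk => (IH k hk).2
      have hA : 0 ≤ assets e c cds (solR e c cds hwf) i :=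
        assets_nonneg e c cds hfs _ i IH
      exact ⟨le_min zero_le_one (div_nonneg hA hL0), min_le_left _ _⟩)

end Aux

/-- Every acyclic financial system has exactly one clearing vector. -/
theorem acyclic_clearing_unique {n : ℕ} (e : Fin n → ℝ) (c : Fin n → Fin n → ℝ)
    (cds : Fin n → Fin n → Fin n → ℝ) (hfs : IsFinSys e c cds)
    (hac : AuxAcyclic c cds) :
    ∃! r : Fin n → ℝ, IsClearing e c cds r := by
  haveI : IsTrans (Fin n) (Relation.TransGen (AuxAdj c cds)) :=
    ⟨fun _ _ _ => Relation.TransGen.trans⟩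
  haveI : IsIrrefl (Fin n) (Relation.TransGen (AuxAdj c cds)) := ⟨hac⟩
  have hwf : WellFounded (Relation.TransGen (AuxAdj c cds)) :=
    Finite.wellFounded_of_trans_of_irrefl _
  -- any two clearing vectors agree
  have huniq : ∀ r r' : Fin n → ℝ, IsClearing e c cds r → IsClearing e c cds r' →
      r = r' := by
    intro r r' hr hr'
    funext i
    refine hwf.induction (C := fun i => r i = r' i) i ?_
    intro i IH
    have hL : totLiab c cds r i = totLiab c cds r' i :=
      totLiab_congr e c cds hfs r r' i IH
    have hA : assets e c cds r i = assets e c cds r' i :=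
      assets_congr e c cds hfs r r' i IH
    have hL0 : 0 ≤ totLiab c cds r i :=
      totLiab_nonneg_s2 e c cds hfs r i fun k _ => (hr.1 k).2
    rcases hL0.lt_or_eq with hpos | hzero
    · rw [(hr.2 i).1 hpos, (hr'.2 i).1 (hL ▸ hpos), hL, hA]
    · rw [(hr.2 i).2 hzero.symm, (hr'.2 i).2 (hL ▸ hzero.symm)]
  -- solR is clearing
  have hclear : IsClearing e c cds (solR e c cds hwf) := by
    refine ⟨solR_bounds e c cds hfs hwf, fun i => ?_⟩
    have hspec := solR_spec e c cds hfs hwf i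
    constructor
    · intro hpos
      rw [hspec, if_neg hpos.ne']
    · intro hzero
      rw [hspec, if_pos hzero]
  exact ⟨solR e c cds hwf, hclear, fun r' hr' => huniq r' _ hr' hclear⟩
end

section
/- Fix x ∈ [0,1]. (i) Consider the financial system with banks {s, b1, b2, b3, b4, b5, t}, external assets e s = x, e b2 = 1, all others 0, debt contracts of notional 1: s→b1, b1→b4, b2→b3, b5→t, and one CDS of notional 1 with debtor b2, creditor b5, reference bank b1. Then every clearing vector r satisfies r b5 = (1 − x)/(2 − x). (ii) Consider the financial system with banks {s, b1, b2, b3, b4, b5, t}, external assets e s = x, e b2 = 1/2, all others 0, debt contracts: s→b1 of notional 1, b1→b4 of notional 1, b2→b5 of notional 2, b5→t of notional 1, and one CDS of notional 1 with debtor b2, creditor b3, reference bank b1. Then every clearing vector r satisfies r b5 = 1/(3 − x). -/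
open Finset

/-- The two basic CDS fragments: the first one (banks `s=0, b1=1, b2=2, b3=3, b4=4, b5=5, t=6`)
forces `r b5 = (1-x)/(2-x)`; the second forces `r b5 = 1/(3-x)`. -/
theorem fragment_recovery_rates (x : ℝ) (hx0 : 0 ≤ x) (hx1 : x ≤ 1) :
    (∀ r : Fin 7 → ℝ,
      IsClearing
        (fun i => if i = 0 then x else if i = 2 then 1 else 0)
        (fun i j =>
          if (i = 0 ∧ j = 1) ∨ (i = 1 ∧ j = 4) ∨ (i = 2 ∧ j = 3) ∨ (i = 5 ∧ j = 6)
          then 1 else 0)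
        (fun i j R => if i = 2 ∧ j = 5 ∧ R = 1 then 1 else 0) r →
      r 5 = (1 - x) / (2 - x)) ∧
    (∀ r : Fin 7 → ℝ,
      IsClearing
        (fun i => if i = 0 then x else if i = 2 then 1/2 else 0)
        (fun i j =>
          if (i = 0 ∧ j = 1) ∨ (i = 1 ∧ j = 4) then 1
          else if i = 2 ∧ j = 5 then 2
          else if i = 5 ∧ j = 6 then 1 else 0)
        (fun i j R => if i = 2 ∧ j = 3 ∧ R = 1 then 1 else 0) r →
      r 5 = 1 / (3 - x)) := by
  constructor
  · intro r h
    obtain ⟨hb, hc⟩ := h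
    have h0 := (hc 0).1
    have h1 := (hc 1).1
    have h2 := (hc 2).1
    have h5 := (hc 5).1
    simp +decide [totLiab, liab, assets, Fin.sum_univ_seven] at h0 h1 h2 h5
    have hr0 : r 0 = x := by rw [h0]; exact min_eq_right hx1
    have hr1 : r 1 = x := by rw [h1, hr0]; exact min_eq_right hx1
    rw [hr1] at h2 h5
    have hpos : (0:ℝ) < 2 - x := by linarith
    have he : (1:ℝ) + (1 - x) = 2 - x := by ring
    rw [he] at h2
    have hr2 : r 2 = (2 - x)⁻¹ := by
      rw [h2 hpos]
      refine min_eq_right ?_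
      rw [inv_eq_one_div]
      exact (div_le_one hpos).2 (by linarith)
    rw [hr2, inv_mul_eq_div] at h5
    rw [h5]
    exact min_eq_right ((div_le_one hpos).2 (by linarith))
  · intro r h
    obtain ⟨hb, hc⟩ := h
    have h0 := (hc 0).1
    have h1 := (hc 1).1
    have h2 := (hc 2).1
    have h5 := (hc 5).1
    simp +decide [totLiab, liab, assets, Fin.sum_univ_seven] at h0 h1 h2 h5
    have hr0 : r 0 = x := by rw [h0]; exact min_eq_right hx1
    have hr1 : r 1 = x := by rw [h1, hr0]; exact min_eq_right hx1
    rw [hr1] at h2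
    have hpos : (0:ℝ) < 3 - x := by linarith
    have he : (1:ℝ) - x + 2 = 3 - x := by ring
    rw [he] at h2
    have hr2 : r 2 = 2⁻¹ / (3 - x) := by
      rw [h2 hpos]
      exact min_eq_right ((div_le_one hpos).2 (by linarith))
    have he2 : (2:ℝ)⁻¹ / (3 - x) * 2 = 1 / (3 - x) := by
      field_simp
    rw [hr2, he2] at h5
    rw [h5]
    exact min_eq_right ((div_le_one hpos).2 (by linarith))
end

section
/- Let T(y) = (1 − y)/(2 − y) and S(y) = 1/(3 − y). Then S(y) = T(T(y)) for all y ∈ [0,1]; consequently, for every nonempty finite list g_1, …, g_m of functions with each g_i ∈ {T, S}, the composition g_m ∘ ⋯ ∘ g_1 maps [0,1] into [0,1] and has exactly one fixed point in [0,1], namely (3 − √5)/2, which is irrational. -/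
/-- The map `T(y) = (1-y)/(2-y)`. -/
noncomputable def T (y : ℝ) : ℝ := (1 - y) / (2 - y)

/-- The map `S(y) = 1/(3-y)`. -/
noncomputable def S (y : ℝ) : ℝ := 1 / (3 - y)

/-!
Both `T` and `S` map `[0,1]` into itself, fix `x = (3 - √5)/2` (the root of `x² - 3x + 1` in
`[0,1]`), and strictly decrease distances there. Hence any nonempty composition of them does the
same, and a map that strictly decreases distances has at most one fixed point.
-/

open Set Function

section ShrinksDist

variable {α : Type*} [MetricSpace α]

def ShrinksDistOn (f : α → α) (s : Set α) : Prop :=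
  ∀ y ∈ s, ∀ z ∈ s, y ≠ z → dist (f y) (f z) < dist y z

theorem ShrinksDistOn.comp {f g : α → α} {s t : Set α} (hf : ShrinksDistOn f t)
    (hg : ShrinksDistOn g s) (hgst : MapsTo g s t) : ShrinksDistOn (f ∘ g) s := by
  intro y hy z hz hyz
  by_cases hgyz : g y = g z
  · simpa [hgyz] using dist_pos.2 hyz
  · exact (hf _ (hgst hy) _ (hgst hz) hgyz).trans (hg y hy z hz hyz)

theorem ShrinksDistOn.eq_of_isFixedPt {f : α → α} {s : Set α} (hf : ShrinksDistOn f s)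
    {x y : α} (hx : x ∈ s) (hy : y ∈ s) (hfx : IsFixedPt f x) (hfy : IsFixedPt f y) :
    y = x := by
  by_contra hyx
  have := hf y hy x hx hyx
  rw [hfx, hfy] at this
  exact this.false

end ShrinksDist

namespace List

variable {α : Type*}

theorem mapsTo_foldl_apply {s : Set α} {l : List (α → α)} (h : ∀ g ∈ l, MapsTo g s s) :
    MapsTo (fun y => l.foldl (fun a g => g a) y) s s := by
  induction l with
  | nil => exact mapsTo_id s
  | cons g l ih =>
    exact (ih fun f hf => h f (mem_cons_of_mem g hf)).comp (h g mem_cons_self)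

theorem isFixedPt_foldl_apply {x : α} {l : List (α → α)} (h : ∀ g ∈ l, IsFixedPt g x) :
    IsFixedPt (fun y => l.foldl (fun a g => g a) y) x := by
  induction l with
  | nil => exact isFixedPt_id x
  | cons g l ih =>
    exact (ih fun f hf => h f (mem_cons_of_mem g hf)).comp (h g mem_cons_self)

theorem shrinksDistOn_foldl_apply [MetricSpace α] {s : Set α} {l : List (α → α)}
    (hl : l ≠ []) (hmaps : ∀ g ∈ l, MapsTo g s s) (hshrink : ∀ g ∈ l, ShrinksDistOn g s) :
    ShrinksDistOn (fun y => l.foldl (fun a g => g a) y) s := by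
  induction l with
  | nil => exact absurd rfl hl
  | cons g l ih =>
    rcases eq_or_ne l [] with rfl | hl'
    · exact hshrink g mem_cons_self
    · exact (ih hl' (fun f hf => hmaps f (mem_cons_of_mem g hf))
        (fun f hf => hshrink f (mem_cons_of_mem g hf))).comp
        (hshrink g mem_cons_self) (hmaps g mem_cons_self)

end List

theorem S_eq_T_T {y : ℝ} (hy : y ≠ 2) : S y = T (T y) := by
  have h2 : 2 - y ≠ 0 := sub_ne_zero.2 hy.symm
  have hnum : 1 - T y = 1 / (2 - y) := by rw [T]; field_simp; ring
  have hden : 2 - T y = (3 - y) / (2 - y) := by rw [T]; field_simp; ring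
  calc S y = 1 / (2 - y) / ((3 - y) / (2 - y)) := by rw [div_div_div_cancel_right₀ h2, S]
    _ = T (T y) := by rw [← hnum, ← hden]; rfl

theorem mapsTo_T : MapsTo T (Icc 0 1) (Icc 0 1) := by
  rintro y ⟨hy0, hy1⟩
  have hd : (0 : ℝ) < 2 - y := by linarith
  exact ⟨div_nonneg (by linarith) hd.le, (div_le_one hd).2 (by linarith)⟩

theorem mapsTo_S : MapsTo S (Icc 0 1) (Icc 0 1) := by
  rintro y ⟨hy0, hy1⟩
  have hd : (0 : ℝ) < 3 - y := by linarith
  exact ⟨div_nonneg zero_le_one hd.le, (div_le_one hd).2 (by linarith)⟩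

theorem shrinksDistOn_T : ShrinksDistOn T (Icc 0 1) := by
  rintro y ⟨hy0, hy1⟩ z ⟨hz0, hz1⟩ hyz
  have hdy : (0 : ℝ) < 2 - y := by linarith
  have hdz : (0 : ℝ) < 2 - z := by linarith
  -- `(2 - y) * (2 - z) ≥ 1` with equality only at `y = z = 1`
  have hden : 1 < (2 - y) * (2 - z) := by
    rcases hyz.lt_or_gt with h | h <;> nlinarith
  have hdiff : T y - T z = (z - y) / ((2 - y) * (2 - z)) := by
    rw [T, T]; field_simp; ring
  rw [Real.dist_eq, Real.dist_eq, hdiff, abs_div, abs_of_pos (mul_pos hdy hdz), abs_sub_comm]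
  exact div_lt_self (abs_pos.2 (sub_ne_zero.2 hyz)) hden

theorem shrinksDistOn_S : ShrinksDistOn S (Icc 0 1) := by
  rintro y ⟨hy0, hy1⟩ z ⟨hz0, hz1⟩ hyz
  have hdy : (0 : ℝ) < 3 - y := by linarith
  have hdz : (0 : ℝ) < 3 - z := by linarith
  have hden : 1 < (3 - y) * (3 - z) := by nlinarith
  have hdiff : S y - S z = (y - z) / ((3 - y) * (3 - z)) := by
    rw [S, S]; field_simp; ring
  rw [Real.dist_eq, Real.dist_eq, hdiff, abs_div, abs_of_pos (mul_pos hdy hdz)]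
  exact div_lt_self (abs_pos.2 (sub_ne_zero.2 hyz)) hden

theorem two_lt_sqrt_five : 2 < √5 := by
  rw [Real.lt_sqrt zero_le_two]; norm_num

theorem sqrt_five_lt_three : √5 < 3 := by
  rw [Real.sqrt_lt' three_pos]; norm_num

theorem mem_Icc_three_sub_sqrt_five_div_two : (3 - √5) / 2 ∈ Icc (0 : ℝ) 1 := by
  constructor <;> linarith [two_lt_sqrt_five, sqrt_five_lt_three]

theorem three_sub_sqrt_five_div_two_mul : (3 - √5) / 2 * (3 - (3 - √5) / 2) = 1 := by
  nlinarith [Real.sq_sqrt (by norm_num : (0 : ℝ) ≤ 5)]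

theorem isFixedPt_T : IsFixedPt T ((3 - √5) / 2) := by
  have h : 2 - (3 - √5) / 2 ≠ 0 := by linarith [two_lt_sqrt_five]
  rw [IsFixedPt, T, div_eq_iff h]
  linarith [three_sub_sqrt_five_div_two_mul]

theorem isFixedPt_S : IsFixedPt S ((3 - √5) / 2) := by
  have h : 3 - (3 - √5) / 2 ≠ 0 := by linarith [two_lt_sqrt_five]
  rw [IsFixedPt, S, div_eq_iff h, three_sub_sqrt_five_div_two_mul]

theorem irrational_three_sub_sqrt_five_div_two : Irrational ((3 - √5) / 2) := by
  simpa using (Nat.prime_five.irrational_sqrt.natCast_sub 3).div_natCast two_ne_zero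

/-- `S = T ∘ T` on `[0,1]`; consequently, any nonempty finite composition of copies of
`T` and `S` maps `[0,1]` into `[0,1]` and has `(3 - √5)/2`, an irrational number, as its
unique fixed point in `[0,1]`.  The composition `g_m ∘ ⋯ ∘ g_1` applied to `y` is
formalized as `l.foldl (fun a g => g a) y` for the list `l = [g_1, …, g_m]`. -/
theorem composition_T_S_fixedPoint :
    (∀ y : ℝ, 0 ≤ y → y ≤ 1 → S y = T (T y)) ∧
    (∀ l : List (ℝ → ℝ), l ≠ [] → (∀ g ∈ l, g = T ∨ g = S) →
      (∀ y : ℝ, 0 ≤ y → y ≤ 1 →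
        0 ≤ l.foldl (fun a g => g a) y ∧ l.foldl (fun a g => g a) y ≤ 1) ∧
      (∀ y : ℝ, 0 ≤ y → y ≤ 1 →
        (l.foldl (fun a g => g a) y = y ↔ y = (3 - Real.sqrt 5) / 2))) ∧
    Irrational ((3 - Real.sqrt 5) / 2) := by
  refine ⟨fun y _ hy1 => S_eq_T_T (by linarith), fun l hl hTS => ?_,
    irrational_three_sub_sqrt_five_div_two⟩
  have hmaps : ∀ g ∈ l, MapsTo g (Icc 0 1) (Icc 0 1) := fun g hg => by
    rcases hTS g hg with rfl | rfl
    exacts [mapsTo_T, mapsTo_S]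
  have hshrink : ∀ g ∈ l, ShrinksDistOn g (Icc 0 1) := fun g hg => by
    rcases hTS g hg with rfl | rfl
    exacts [shrinksDistOn_T, shrinksDistOn_S]
  have hfix : IsFixedPt (fun y => l.foldl (fun a g => g a) y) ((3 - √5) / 2) :=
    List.isFixedPt_foldl_apply fun g hg => by
      rcases hTS g hg with rfl | rfl
      exacts [isFixedPt_T, isFixedPt_S]
  refine ⟨fun y hy0 hy1 => List.mapsTo_foldl_apply hmaps ⟨hy0, hy1⟩,
    fun y hy0 hy1 => ⟨?_, ?_⟩⟩
  · exact fun hy => (List.shrinksDistOn_foldl_apply hl hmaps hshrink).eq_of_isFixedPt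
      mem_Icc_three_sub_sqrt_five_div_two ⟨hy0, hy1⟩ hfix hy
  · rintro rfl
    exact hfix
end

section
/- Fix x1, x2 ∈ [0,1] with x1 + x2 ≤ 1 (addition gadget). Consider the financial system with banks {s1, s2, o, t}, external assets e s1 = x1, e s2 = x2, all others 0, and debt contracts of notional 1: s1→o, s2→o, o→t (no CDSes). Then every clearing vector r of this system satisfies r o = x1 + x2. -/
open Finset

/-- Addition gadget: banks `s1=0, s2=1, o=2, t=3`, external assets `x1` at `s1` and
`x2` at `s2`, unit debt contracts `s1→o`, `s2→o`, `o→t`, no CDSes.  If `x1 + x2 ≤ 1`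
then every clearing vector has `r o = x1 + x2`. -/
theorem addition_gadget (x1 x2 : ℝ) (hx1 : 0 ≤ x1) (hx1' : x1 ≤ 1)
    (hx2 : 0 ≤ x2) (hx2' : x2 ≤ 1) (hsum : x1 + x2 ≤ 1) :
    ∀ r : Fin 4 → ℝ,
      IsClearing
        (fun i => if i = 0 then x1 else if i = 1 then x2 else 0)
        (fun i j => if (i = 0 ∧ j = 2) ∨ (i = 1 ∧ j = 2) ∨ (i = 2 ∧ j = 3) then 1 else 0)
        (fun _ _ _ => 0) r →
      r 2 = x1 + x2 := by
  intro r hr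
  obtain ⟨hrange, hclear⟩ := hr
  have hL0 : totLiab (fun i j => if (i = 0 ∧ j = 2) ∨ (i = 1 ∧ j = 2) ∨ (i = 2 ∧ j = 3) then 1 else 0)
      (fun _ _ _ => 0) r 0 = 1 := by
    simp [totLiab, liab, Fin.sum_univ_four]
  have hL1 : totLiab (fun i j => if (i = 0 ∧ j = 2) ∨ (i = 1 ∧ j = 2) ∨ (i = 2 ∧ j = 3) then 1 else 0)
      (fun _ _ _ => 0) r 1 = 1 := by
    simp [totLiab, liab, Fin.sum_univ_four]
  have hL2 : totLiab (fun i j => if (i = 0 ∧ j = 2) ∨ (i = 1 ∧ j = 2) ∨ (i = 2 ∧ j = 3) then 1 else 0)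
      (fun _ _ _ => 0) r 2 = 1 := by
    simp [totLiab, liab, Fin.sum_univ_four]
  have hA0 : assets (fun i => if i = 0 then x1 else if i = 1 then x2 else 0)
      (fun i j => if (i = 0 ∧ j = 2) ∨ (i = 1 ∧ j = 2) ∨ (i = 2 ∧ j = 3) then 1 else 0)
      (fun _ _ _ => 0) r 0 = x1 := by
    simp [assets, liab, Fin.sum_univ_four]
  have hA1 : assets (fun i => if i = 0 then x1 else if i = 1 then x2 else 0)
      (fun i j => if (i = 0 ∧ j = 2) ∨ (i = 1 ∧ j = 2) ∨ (i = 2 ∧ j = 3) then 1 else 0)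
      (fun _ _ _ => 0) r 1 = x2 := by
    simp [assets, liab, Fin.sum_univ_four]
  have hA2 : assets (fun i => if i = 0 then x1 else if i = 1 then x2 else 0)
      (fun i j => if (i = 0 ∧ j = 2) ∨ (i = 1 ∧ j = 2) ∨ (i = 2 ∧ j = 3) then 1 else 0)
      (fun _ _ _ => 0) r 2 = r 0 + r 1 := by
    simp [assets, liab, Fin.sum_univ_four]
  have h0 := (hclear 0).1 (by rw [hL0]; norm_num)
  have h1 := (hclear 1).1 (by rw [hL1]; norm_num)
  have h2 := (hclear 2).1 (by rw [hL2]; norm_num)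
  rw [hL0, hA0] at h0
  rw [hL1, hA1] at h1
  rw [hL2, hA2] at h2
  simp only [div_one] at h0 h1 h2
  rw [min_eq_right hx1'] at h0
  rw [min_eq_right hx2'] at h1
  rw [h0, h1, min_eq_right hsum] at h2
  exact h2
end

section
/- Fix x1, x2 ∈ [0,1] (multiplication gadget). Consider the financial system with banks {s1, s2, v1, v2, w, v4, v5, v6, v7, v8, o, t}, external assets e s1 = x1, e s2 = x2, e w = 1, all others 0; debt contracts of notional 1: s1→v1, v1→v2, v4→v5, s2→v6, v7→o, o→t; and CDSes of notional 1: (debtor w, creditor v4, reference v1), (debtor v6, creditor v7, reference v4), (debtor v6, creditor v8, reference v1). Then every clearing vector r of this system satisfies r o = x1 · x2. -/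
open Finset

private lemma fs1 : ((0 : Fin 1)).succ = (1 : Fin 2) := rfl
private lemma fs2 : ((0 : Fin 2)).succ = (1 : Fin 3) := rfl
private lemma fs3 : ((1 : Fin 2)).succ = (2 : Fin 3) := rfl
private lemma fs4 : ((0 : Fin 3)).succ = (1 : Fin 4) := rfl
private lemma fs5 : ((1 : Fin 3)).succ = (2 : Fin 4) := rfl
private lemma fs6 : ((2 : Fin 3)).succ = (3 : Fin 4) := rfl
private lemma fs7 : ((0 : Fin 4)).succ = (1 : Fin 5) := rfl
private lemma fs8 : ((1 : Fin 4)).succ = (2 : Fin 5) := rfl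
private lemma fs9 : ((2 : Fin 4)).succ = (3 : Fin 5) := rfl
private lemma fs10 : ((3 : Fin 4)).succ = (4 : Fin 5) := rfl
private lemma fs11 : ((0 : Fin 5)).succ = (1 : Fin 6) := rfl
private lemma fs12 : ((1 : Fin 5)).succ = (2 : Fin 6) := rfl
private lemma fs13 : ((2 : Fin 5)).succ = (3 : Fin 6) := rfl
private lemma fs14 : ((3 : Fin 5)).succ = (4 : Fin 6) := rfl
private lemma fs15 : ((4 : Fin 5)).succ = (5 : Fin 6) := rfl
private lemma fs16 : ((0 : Fin 6)).succ = (1 : Fin 7) := rfl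
private lemma fs17 : ((1 : Fin 6)).succ = (2 : Fin 7) := rfl
private lemma fs18 : ((2 : Fin 6)).succ = (3 : Fin 7) := rfl
private lemma fs19 : ((3 : Fin 6)).succ = (4 : Fin 7) := rfl
private lemma fs20 : ((4 : Fin 6)).succ = (5 : Fin 7) := rfl
private lemma fs21 : ((5 : Fin 6)).succ = (6 : Fin 7) := rfl
private lemma fs22 : ((0 : Fin 7)).succ = (1 : Fin 8) := rfl
private lemma fs23 : ((1 : Fin 7)).succ = (2 : Fin 8) := rfl
private lemma fs24 : ((2 : Fin 7)).succ = (3 : Fin 8) := rfl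
private lemma fs25 : ((3 : Fin 7)).succ = (4 : Fin 8) := rfl
private lemma fs26 : ((4 : Fin 7)).succ = (5 : Fin 8) := rfl
private lemma fs27 : ((5 : Fin 7)).succ = (6 : Fin 8) := rfl
private lemma fs28 : ((6 : Fin 7)).succ = (7 : Fin 8) := rfl
private lemma fs29 : ((0 : Fin 8)).succ = (1 : Fin 9) := rfl
private lemma fs30 : ((1 : Fin 8)).succ = (2 : Fin 9) := rfl
private lemma fs31 : ((2 : Fin 8)).succ = (3 : Fin 9) := rfl
private lemma fs32 : ((3 : Fin 8)).succ = (4 : Fin 9) := rfl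
private lemma fs33 : ((4 : Fin 8)).succ = (5 : Fin 9) := rfl
private lemma fs34 : ((5 : Fin 8)).succ = (6 : Fin 9) := rfl
private lemma fs35 : ((6 : Fin 8)).succ = (7 : Fin 9) := rfl
private lemma fs36 : ((7 : Fin 8)).succ = (8 : Fin 9) := rfl
private lemma fs37 : ((0 : Fin 9)).succ = (1 : Fin 10) := rfl
private lemma fs38 : ((1 : Fin 9)).succ = (2 : Fin 10) := rfl
private lemma fs39 : ((2 : Fin 9)).succ = (3 : Fin 10) := rfl
private lemma fs40 : ((3 : Fin 9)).succ = (4 : Fin 10) := rfl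
private lemma fs41 : ((4 : Fin 9)).succ = (5 : Fin 10) := rfl
private lemma fs42 : ((5 : Fin 9)).succ = (6 : Fin 10) := rfl
private lemma fs43 : ((6 : Fin 9)).succ = (7 : Fin 10) := rfl
private lemma fs44 : ((7 : Fin 9)).succ = (8 : Fin 10) := rfl
private lemma fs45 : ((8 : Fin 9)).succ = (9 : Fin 10) := rfl
private lemma fs46 : ((0 : Fin 10)).succ = (1 : Fin 11) := rfl
private lemma fs47 : ((1 : Fin 10)).succ = (2 : Fin 11) := rfl
private lemma fs48 : ((2 : Fin 10)).succ = (3 : Fin 11) := rfl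
private lemma fs49 : ((3 : Fin 10)).succ = (4 : Fin 11) := rfl
private lemma fs50 : ((4 : Fin 10)).succ = (5 : Fin 11) := rfl
private lemma fs51 : ((5 : Fin 10)).succ = (6 : Fin 11) := rfl
private lemma fs52 : ((6 : Fin 10)).succ = (7 : Fin 11) := rfl
private lemma fs53 : ((7 : Fin 10)).succ = (8 : Fin 11) := rfl
private lemma fs54 : ((8 : Fin 10)).succ = (9 : Fin 11) := rfl
private lemma fs55 : ((9 : Fin 10)).succ = (10 : Fin 11) := rfl
private lemma fs56 : ((0 : Fin 11)).succ = (1 : Fin 12) := rfl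
private lemma fs57 : ((1 : Fin 11)).succ = (2 : Fin 12) := rfl
private lemma fs58 : ((2 : Fin 11)).succ = (3 : Fin 12) := rfl
private lemma fs59 : ((3 : Fin 11)).succ = (4 : Fin 12) := rfl
private lemma fs60 : ((4 : Fin 11)).succ = (5 : Fin 12) := rfl
private lemma fs61 : ((5 : Fin 11)).succ = (6 : Fin 12) := rfl
private lemma fs62 : ((6 : Fin 11)).succ = (7 : Fin 12) := rfl
private lemma fs63 : ((7 : Fin 11)).succ = (8 : Fin 12) := rfl
private lemma fs64 : ((8 : Fin 11)).succ = (9 : Fin 12) := rfl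
private lemma fs65 : ((9 : Fin 11)).succ = (10 : Fin 12) := rfl
private lemma fs66 : ((10 : Fin 11)).succ = (11 : Fin 12) := rfl

private lemma sum12 (f : Fin 12 → ℝ) : ∑ i, f i =
    f 0 + f 1 + f 2 + f 3 + f 4 + f 5 + f 6 + f 7 + f 8 + f 9 + f 10 + f 11 := by
  simp only [Fin.sum_univ_succ, Finset.univ_eq_empty, Finset.sum_empty, fs1, fs2, fs3, fs4, fs5, fs6, fs7, fs8, fs9, fs10, fs11, fs12, fs13, fs14, fs15, fs16, fs17, fs18, fs19, fs20, fs21, fs22, fs23, fs24, fs25, fs26, fs27, fs28, fs29, fs30, fs31, fs32, fs33, fs34, fs35, fs36, fs37, fs38, fs39, fs40, fs41, fs42, fs43, fs44, fs45, fs46, fs47, fs48, fs49, fs50, fs51, fs52, fs53, fs54, fs55, fs56, fs57, fs58, fs59, fs60, fs61, fs62, fs63, fs64, fs65, fs66]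
  ring

/-- Multiplication gadget: banks `s1=0, s2=1, v1=2, v2=3, w=4, v4=5, v5=6, v6=7, v7=8,
v8=9, o=10, t=11`; external assets `x1` at `s1`, `x2` at `s2`, `1` at `w`; unit debt
contracts `s1→v1`, `v1→v2`, `v4→v5`, `s2→v6`, `v7→o`, `o→t`; unit CDSes
`(w, v4, v1)`, `(v6, v7, v4)`, `(v6, v8, v1)`.  Every clearing vector has
`r o = x1 * x2`. -/
theorem multiplication_gadget (x1 x2 : ℝ) (hx1 : 0 ≤ x1) (hx1' : x1 ≤ 1)
    (hx2 : 0 ≤ x2) (hx2' : x2 ≤ 1) :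
    ∀ r : Fin 12 → ℝ,
      IsClearing
        (fun i => if i = 0 then x1 else if i = 1 then x2 else if i = 4 then 1 else 0)
        (fun i j =>
          if (i = 0 ∧ j = 2) ∨ (i = 2 ∧ j = 3) ∨ (i = 5 ∧ j = 6) ∨ (i = 1 ∧ j = 7) ∨
             (i = 8 ∧ j = 10) ∨ (i = 10 ∧ j = 11) then 1 else 0)
        (fun i j R =>
          if (i = 4 ∧ j = 5 ∧ R = 2) ∨ (i = 7 ∧ j = 8 ∧ R = 5) ∨
             (i = 7 ∧ j = 9 ∧ R = 2) then 1 else 0) r →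
      r 10 = x1 * x2 := by
  intro r hcl
  set e : Fin 12 → ℝ :=
    (fun i => if i = 0 then x1 else if i = 1 then x2 else if i = 4 then 1 else 0) with he
  set c : Fin 12 → Fin 12 → ℝ :=
    (fun i j =>
      if (i = 0 ∧ j = 2) ∨ (i = 2 ∧ j = 3) ∨ (i = 5 ∧ j = 6) ∨ (i = 1 ∧ j = 7) ∨
         (i = 8 ∧ j = 10) ∨ (i = 10 ∧ j = 11) then (1:ℝ) else 0) with hc
  set cds : Fin 12 → Fin 12 → Fin 12 → ℝ :=
    (fun i j R =>
      if (i = 4 ∧ j = 5 ∧ R = 2) ∨ (i = 7 ∧ j = 8 ∧ R = 5) ∨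
         (i = 7 ∧ j = 9 ∧ R = 2) then (1:ℝ) else 0) with hcds
  obtain ⟨hb, hC⟩ := hcl
  have hL0 : totLiab c cds r 0 = 1 := by
    simp (config := { decide := true }) only [totLiab, liab, sum12, hc, hcds,
      if_true, if_false]
    ring
  have hA0 : assets e c cds r 0 = x1 := by
    simp (config := { decide := true }) only [assets, liab, sum12, he, hc, hcds,
      if_true, if_false]
    ring
  have hr0 : r 0 = x1 := by
    have h := (hC 0).1 (by rw [hL0]; norm_num)
    rw [hL0, hA0, div_one, min_eq_right hx1'] at h
    exact h
  have hL2 : totLiab c cds r 2 = 1 := by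
    simp (config := { decide := true }) only [totLiab, liab, sum12, hc, hcds,
      if_true, if_false]
    ring
  have hA2 : assets e c cds r 2 = r 0 := by
    simp (config := { decide := true }) only [assets, liab, sum12, he, hc, hcds,
      if_true, if_false]
    ring
  have hr2 : r 2 = x1 := by
    have h := (hC 2).1 (by rw [hL2]; norm_num)
    rw [hL2, hA2, div_one, hr0, min_eq_right hx1'] at h
    exact h
  have hL4 : totLiab c cds r 4 = 1 - r 2 := by
    simp (config := { decide := true }) only [totLiab, liab, sum12, hc, hcds,
      if_true, if_false]
    ring
  have hA4 : assets e c cds r 4 = 1 := by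
    simp (config := { decide := true }) only [assets, liab, sum12, he, hc, hcds,
      if_true, if_false]
    ring
  have hr4 : r 4 = 1 := by
    rcases eq_or_lt_of_le hx1' with h1 | h1
    · exact (hC 4).2 (by rw [hL4, hr2, ← h1]; ring)
    · have hpos : 0 < 1 - x1 := by linarith
      have h := (hC 4).1 (by rw [hL4, hr2]; linarith)
      rw [hL4, hA4, hr2] at h
      rw [h, min_eq_left]
      have : (1 : ℝ) ≤ 1 / (1 - x1) := by
        rw [le_div_iff₀ hpos]; linarith
      linarith
  have hL5 : totLiab c cds r 5 = 1 := by
    simp (config := { decide := true }) only [totLiab, liab, sum12, hc, hcds,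
      if_true, if_false]
    ring
  have hA5 : assets e c cds r 5 = r 4 * (1 - r 2) := by
    simp (config := { decide := true }) only [assets, liab, sum12, he, hc, hcds,
      if_true, if_false]
    ring
  have hr5 : r 5 = 1 - x1 := by
    have h := (hC 5).1 (by rw [hL5]; norm_num)
    rw [hL5, hA5, div_one, hr2, hr4, one_mul, min_eq_right (by linarith)] at h
    exact h
  have hL1 : totLiab c cds r 1 = 1 := by
    simp (config := { decide := true }) only [totLiab, liab, sum12, hc, hcds,
      if_true, if_false]
    ring
  have hA1 : assets e c cds r 1 = x2 := by
    simp (config := { decide := true }) only [assets, liab, sum12, he, hc, hcds,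
      if_true, if_false]
    ring
  have hr1 : r 1 = x2 := by
    have h := (hC 1).1 (by rw [hL1]; norm_num)
    rw [hL1, hA1, div_one, min_eq_right hx2'] at h
    exact h
  have hL7 : totLiab c cds r 7 = (1 - r 5) + (1 - r 2) := by
    simp (config := { decide := true }) only [totLiab, liab, sum12, hc, hcds,
      if_true, if_false]
    ring
  have hL7' : totLiab c cds r 7 = 1 := by rw [hL7, hr5, hr2]; ring
  have hA7 : assets e c cds r 7 = r 1 := by
    simp (config := { decide := true }) only [assets, liab, sum12, he, hc, hcds,
      if_true, if_false]
    ring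
  have hr7 : r 7 = x2 := by
    have h := (hC 7).1 (by rw [hL7']; norm_num)
    rw [hL7', hA7, div_one, hr1, min_eq_right hx2'] at h
    exact h
  have hL8 : totLiab c cds r 8 = 1 := by
    simp (config := { decide := true }) only [totLiab, liab, sum12, hc, hcds,
      if_true, if_false]
    ring
  have hA8 : assets e c cds r 8 = r 7 * (1 - r 5) := by
    simp (config := { decide := true }) only [assets, liab, sum12, he, hc, hcds,
      if_true, if_false]
    ring
  have hmul : x2 * x1 ≤ 1 := mul_le_one₀ hx2' hx1 hx1'
  have hr8 : r 8 = x2 * x1 := by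
    have h := (hC 8).1 (by rw [hL8]; norm_num)
    rw [hL8, hA8, div_one, hr7, hr5] at h
    rw [h, show x2 * (1 - (1 - x1)) = x2 * x1 by ring, min_eq_right hmul]
  have hL10 : totLiab c cds r 10 = 1 := by
    simp (config := { decide := true }) only [totLiab, liab, sum12, hc, hcds,
      if_true, if_false]
    ring
  have hA10 : assets e c cds r 10 = r 8 := by
    simp (config := { decide := true }) only [assets, liab, sum12, he, hc, hcds,
      if_true, if_false]
    ring
  have h := (hC 10).1 (by rw [hL10]; norm_num)
  rw [hL10, hA10, div_one, hr8, min_eq_right hmul] at h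
  rw [h]; ring
end

section
/- Fix x1, x2 ∈ [0,1] (positive-subtraction gadget). Consider the financial system with banks {s1, s2, v1, v2, w1, u1, v7, v8, w2, o, t}, external assets e s1 = x1, e s2 = x2, e w1 = e w2 = 1, all others 0; debt contracts of notional 1: s1→v1, v1→v2, u1→v7, s2→v7, v7→v8, o→t; and CDSes of notional 1: (debtor w1, creditor u1, reference v1) and (debtor w2, creditor o, reference v7). Then every clearing vector r of this system satisfies r o = max (x1 − x2) 0. -/
open Finset

/-!
The gadget is acyclic, so the clearing equations can be solved bank by bank. `s1` and `v1` pay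
`x1`; the CDS writer `w1` owes `1 - r v1 ≤ 1 = e w1`, so it is solvent and `u1` receives exactly
`1 - x1`. Then `v7` recovers `min 1 (1 - x1 + x2)`, the writer `w2` is again solvent, and `o`
receives the shortfall `1 - min 1 (1 - x1 + x2) = max (x1 - x2) 0` on its unit liability.
-/

section Clearing

variable {n : ℕ} {e : Fin n → ℝ} {c : Fin n → Fin n → ℝ}
  {cds : Fin n → Fin n → Fin n → ℝ} {r : Fin n → ℝ} {i : Fin n}

theorem IsClearing.eq_min_one_assets_of_totLiab_eq_one (hr : IsClearing e c cds r)
    (hL : totLiab c cds r i = 1) : r i = min 1 (assets e c cds r i) := by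
  simpa [hL] using (hr.2 i).1 (by rw [hL]; exact one_pos)

theorem IsClearing.eq_one_of_totLiab_le_assets (hr : IsClearing e c cds r)
    (hL : 0 ≤ totLiab c cds r i) (hLA : totLiab c cds r i ≤ assets e c cds r i) : r i = 1 := by
  rcases hL.eq_or_lt with hL | hL
  · exact (hr.2 i).2 hL.symm
  · rw [(hr.2 i).1 hL, min_eq_left ((one_le_div hL).2 hLA)]

end Clearing

namespace PositiveSubtractionGadget

local notation "s1" => (0 : Fin 11)
local notation "s2" => (1 : Fin 11)
local notation "v1" => (2 : Fin 11)
local notation "v2" => (3 : Fin 11)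
local notation "w1" => (4 : Fin 11)
local notation "u1" => (5 : Fin 11)
local notation "v7" => (6 : Fin 11)
local notation "v8" => (7 : Fin 11)
local notation "w2" => (8 : Fin 11)
local notation "o" => (9 : Fin 11)
local notation "t" => (10 : Fin 11)

def externalAssets (x1 x2 : ℝ) (i : Fin 11) : ℝ :=
  if i = s1 then x1 else if i = s2 then x2 else if i = w1 ∨ i = w2 then 1 else 0

def debt (i j : Fin 11) : ℝ :=
  if (i = s1 ∧ j = v1) ∨ (i = v1 ∧ j = v2) ∨ (i = u1 ∧ j = v7) ∨ (i = s2 ∧ j = v7) ∨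
     (i = v7 ∧ j = v8) ∨ (i = o ∧ j = t) then 1 else 0

def cds (i j R : Fin 11) : ℝ :=
  if (i = w1 ∧ j = u1 ∧ R = v1) ∨ (i = w2 ∧ j = o ∧ R = v7) then 1 else 0

variable {x1 x2 : ℝ} {r : Fin 11 → ℝ} (hr : IsClearing (externalAssets x1 x2) debt cds r)
include hr

theorem rate_s1 : r s1 = min 1 x1 := by
  rw [hr.eq_min_one_assets_of_totLiab_eq_one (by simp [totLiab, liab, debt, cds])]
  simp [assets, liab, externalAssets, debt, cds]

theorem rate_s2 : r s2 = min 1 x2 := by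
  rw [hr.eq_min_one_assets_of_totLiab_eq_one (by simp [totLiab, liab, debt, cds])]
  simp [assets, liab, externalAssets, debt, cds]

theorem rate_v1 : r v1 = min 1 (r s1) := by
  rw [hr.eq_min_one_assets_of_totLiab_eq_one (by simp [totLiab, liab, debt, cds])]
  simp [assets, liab, externalAssets, debt, cds]

theorem rate_w1 : r w1 = 1 := by
  have hL : totLiab debt cds r w1 = 1 - r v1 := by
    simp [totLiab, liab, debt, cds, Fin.sum_univ_succ]
  have hA : assets (externalAssets x1 x2) debt cds r w1 = 1 := by
    simp [assets, liab, externalAssets, debt, cds]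
  apply hr.eq_one_of_totLiab_le_assets <;> linarith [hr.1 v1]

theorem rate_u1 : r u1 = 1 - r v1 := by
  rw [hr.eq_min_one_assets_of_totLiab_eq_one (by simp [totLiab, liab, debt, cds])]
  simp [assets, liab, externalAssets, debt, cds, Fin.sum_univ_succ,
    rate_w1 hr, (hr.1 v1).1]

theorem rate_v7 : r v7 = min 1 (r u1 + r s2) := by
  rw [hr.eq_min_one_assets_of_totLiab_eq_one (by simp [totLiab, liab, debt, cds])]
  simp [assets, liab, externalAssets, debt, cds, Fin.sum_univ_succ, add_comm]

theorem rate_w2 : r w2 = 1 := by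
  have hL : totLiab debt cds r w2 = 1 - r v7 := by
    simp [totLiab, liab, debt, cds, Fin.sum_univ_succ]
  have hA : assets (externalAssets x1 x2) debt cds r w2 = 1 := by
    simp [assets, liab, externalAssets, debt, cds]
  apply hr.eq_one_of_totLiab_le_assets <;> linarith [hr.1 v7]

theorem rate_o : r o = 1 - r v7 := by
  rw [hr.eq_min_one_assets_of_totLiab_eq_one (by simp [totLiab, liab, debt, cds])]
  simp [assets, liab, externalAssets, debt, cds, Fin.sum_univ_succ,
    rate_w2 hr, (hr.1 v7).1]

end PositiveSubtractionGadget

theorem positive_subtraction_gadget_general (x1 x2 : ℝ) (hx1' : x1 ≤ 1) (hx2' : x2 ≤ 1) :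
    ∀ r : Fin 11 → ℝ,
      IsClearing
        (fun i => if i = 0 then x1 else if i = 1 then x2
                  else if i = 4 ∨ i = 8 then 1 else 0)
        (fun i j =>
          if (i = 0 ∧ j = 2) ∨ (i = 2 ∧ j = 3) ∨ (i = 5 ∧ j = 6) ∨ (i = 1 ∧ j = 6) ∨
             (i = 6 ∧ j = 7) ∨ (i = 9 ∧ j = 10) then 1 else 0)
        (fun i j R =>
          if (i = 4 ∧ j = 5 ∧ R = 2) ∨ (i = 8 ∧ j = 9 ∧ R = 6) then 1 else 0) r →
      r 9 = max (x1 - x2) 0 := by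
  intro r hr
  have h_o : r 9 = 1 - min 1 (1 - (x1 - x2)) := by
    open PositiveSubtractionGadget in
    rw [rate_o hr, rate_v7 hr, rate_u1 hr, rate_s2 hr, rate_v1 hr, rate_s1 hr,
      min_eq_right hx1', min_eq_right hx1', min_eq_right hx2', sub_add]
  rw [h_o, ← max_sub_sub_left, sub_self, sub_sub_cancel, max_comm]

/-- Positive-subtraction gadget: banks `s1=0, s2=1, v1=2, v2=3, w1=4, u1=5, v7=6, v8=7,
w2=8, o=9, t=10`; external assets `x1` at `s1`, `x2` at `s2`, `1` at `w1` and `w2`;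
unit debt contracts `s1→v1`, `v1→v2`, `u1→v7`, `s2→v7`, `v7→v8`, `o→t`; unit CDSes
`(w1, u1, v1)` and `(w2, o, v7)`.  Every clearing vector has `r o = max (x1 - x2) 0`. -/
theorem positive_subtraction_gadget (x1 x2 : ℝ) (hx1 : 0 ≤ x1) (hx1' : x1 ≤ 1)
    (hx2 : 0 ≤ x2) (hx2' : x2 ≤ 1) :
    ∀ r : Fin 11 → ℝ,
      IsClearing
        (fun i => if i = 0 then x1 else if i = 1 then x2
                  else if i = 4 ∨ i = 8 then 1 else 0)
        (fun i j =>
          if (i = 0 ∧ j = 2) ∨ (i = 2 ∧ j = 3) ∨ (i = 5 ∧ j = 6) ∨ (i = 1 ∧ j = 6) ∨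
             (i = 6 ∧ j = 7) ∨ (i = 9 ∧ j = 10) then 1 else 0)
        (fun i j R =>
          if (i = 4 ∧ j = 5 ∧ R = 2) ∨ (i = 8 ∧ j = 9 ∧ R = 6) then 1 else 0) r →
      r 9 = max (x1 - x2) 0 :=
  positive_subtraction_gadget_general x1 x2 hx1' hx2'
end

section
/- Fix x ∈ [0,1] (inversion gadget). Consider the financial system with banks {s, v1, v2, w, u, o, t}, external assets e s = x, e w = 1, all others 0; debt contracts of notional 1: s→v1, v1→v2, u→o, o→t; and one CDS of notional 1 with debtor w, creditor u, reference bank v1. Then every clearing vector r of this system satisfies r o = 1 − x. -/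
open Finset

/-- Inversion gadget: banks `s=0, v1=1, v2=2, w=3, u=4, o=5, t=6`; external assets `x`
at `s` and `1` at `w`; unit debt contracts `s→v1`, `v1→v2`, `u→o`, `o→t`; one unit CDS
`(w, u, v1)`.  Every clearing vector has `r o = 1 - x`. -/
theorem inversion_gadget (x : ℝ) (hx : 0 ≤ x) (hx' : x ≤ 1) :
    ∀ r : Fin 7 → ℝ,
      IsClearing
        (fun i => if i = 0 then x else if i = 3 then 1 else 0)
        (fun i j =>
          if (i = 0 ∧ j = 1) ∨ (i = 1 ∧ j = 2) ∨ (i = 4 ∧ j = 5) ∨ (i = 5 ∧ j = 6)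
          then 1 else 0)
        (fun i j R => if i = 3 ∧ j = 4 ∧ R = 1 then 1 else 0) r →
      r 5 = 1 - x := by
  intro r ⟨hbd, hcl⟩
  set e : Fin 7 → ℝ := (fun i => if i = 0 then x else if i = 3 then 1 else 0) with he
  set c : Fin 7 → Fin 7 → ℝ := (fun i j =>
          if (i = 0 ∧ j = 1) ∨ (i = 1 ∧ j = 2) ∨ (i = 4 ∧ j = 5) ∨ (i = 5 ∧ j = 6)
          then 1 else 0) with hc
  set cds : Fin 7 → Fin 7 → Fin 7 → ℝ := (fun i j R => if i = 3 ∧ j = 4 ∧ R = 1 then 1 else 0) with hcds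
  have hL0 : totLiab c cds r 0 = 1 := by
    simp [totLiab, liab, hc, hcds, Fin.sum_univ_seven]
  have hL1 : totLiab c cds r 1 = 1 := by
    simp [totLiab, liab, hc, hcds, Fin.sum_univ_seven]
  have hL3 : totLiab c cds r 3 = 1 - r 1 := by
    simp [totLiab, liab, hc, hcds, Fin.sum_univ_seven]
  have hL4 : totLiab c cds r 4 = 1 := by
    simp [totLiab, liab, hc, hcds, Fin.sum_univ_seven]
  have hL5 : totLiab c cds r 5 = 1 := by
    simp [totLiab, liab, hc, hcds, Fin.sum_univ_seven]
  have hA0 : assets e c cds r 0 = x := by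
    simp [assets, liab, he, hc, hcds, Fin.sum_univ_seven]
  have hA1 : assets e c cds r 1 = r 0 := by
    simp [assets, liab, he, hc, hcds, Fin.sum_univ_seven]
  have hA3 : assets e c cds r 3 = 1 := by
    simp [assets, liab, he, hc, hcds, Fin.sum_univ_seven]
  have hA4 : assets e c cds r 4 = r 3 * (1 - r 1) := by
    simp [assets, liab, he, hc, hcds, Fin.sum_univ_seven]
  have hA5 : assets e c cds r 5 = r 4 := by
    simp [assets, liab, he, hc, hcds, Fin.sum_univ_seven]
  have h0 : r 0 = x := by
    have := (hcl 0).1 (by rw [hL0]; norm_num)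
    rw [hA0, hL0] at this
    simpa [min_eq_right hx'] using this
  have h1 : r 1 = x := by
    have := (hcl 1).1 (by rw [hL1]; norm_num)
    rw [hA1, hL1, h0] at this
    simpa [min_eq_right hx'] using this
  have h3 : r 3 = 1 := by
    rcases lt_or_eq_of_le (sub_nonneg.mpr (hbd 1).2) with h | h
    · have := (hcl 3).1 (by rw [hL3]; exact h)
      rw [hA3, hL3] at this
      rw [this, min_eq_left]
      rw [le_div_iff₀ h]; linarith
    · exact (hcl 3).2 (by rw [hL3, ← h])
  have h4 : r 4 = 1 - x := by
    have := (hcl 4).1 (by rw [hL4]; norm_num)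
    rw [hA4, hL4, h3, h1] at this
    rw [this]; rw [min_eq_right (by linarith)]; ring
  have := (hcl 5).1 (by rw [hL5]; norm_num)
  rw [hA5, hL5, h4] at this
  rw [this, div_one, min_eq_right (by linarith)]
end

section
/- Fix x ∈ [0,1] and a constant c ∈ (0,1] (duplication / multiplication-by-constant gadget). Consider the financial system with banks {s, b1, o1, t1, b2, b3, b4, b5, b6, o2, t2}, external assets e s = x, e b2 = 1, e b5 = c, all others 0; debt contracts of notional 1: s→b1, b1→o1, o1→t1, b3→b4, b6→o2, o2→t2; a CDS of notional 1 with debtor b2, creditor b3, reference bank b1; and a CDS of notional c with debtor b5, creditor b6, reference bank b3. Then every clearing vector r of this system satisfies r o1 = x and r o2 = c · x. -/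
open Finset

/-- Duplication / multiplication-by-constant gadget: banks `s=0, b1=1, o1=2, t1=3,
b2=4, b3=5, b4=6, b5=7, b6=8, o2=9, t2=10`; external assets `x` at `s`, `1` at `b2`,
`cst` at `b5`; unit debt contracts `s→b1`, `b1→o1`, `o1→t1`, `b3→b4`, `b6→o2`,
`o2→t2`; a unit CDS `(b2, b3, b1)` and a CDS `(b5, b6, b3)` of notional `cst`.
Every clearing vector has `r o1 = x` and `r o2 = cst * x`. -/
theorem duplication_gadget (x cst : ℝ) (hx : 0 ≤ x) (hx' : x ≤ 1)
    (hcst : 0 < cst) (hcst' : cst ≤ 1) :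
    ∀ r : Fin 11 → ℝ,
      IsClearing
        (fun i => if i = 0 then x else if i = 4 then 1 else if i = 7 then cst else 0)
        (fun i j =>
          if (i = 0 ∧ j = 1) ∨ (i = 1 ∧ j = 2) ∨ (i = 2 ∧ j = 3) ∨ (i = 5 ∧ j = 6) ∨
             (i = 8 ∧ j = 9) ∨ (i = 9 ∧ j = 10) then 1 else 0)
        (fun i j R =>
          if i = 4 ∧ j = 5 ∧ R = 1 then 1
          else if i = 7 ∧ j = 8 ∧ R = 5 then cst else 0) r →
      r 2 = x ∧ r 9 = cst * x := by
  intro r hr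
  obtain ⟨hbd, hcl⟩ := hr
  have h0 := hcl 0
  have h1 := hcl 1
  have h2 := hcl 2
  have h4 := hcl 4
  have h5 := hcl 5
  have h7 := hcl 7
  have h8 := hcl 8
  have h9 := hcl 9
  simp (config := { decide := true }) [totLiab, assets, liab, Fin.sum_univ_succ,
    Fin.succ] at h0 h1 h2 h4 h5 h7 h8 h9
  have hr0 : r 0 = x := by rw [h0]; exact min_eq_right hx'
  have hr1 : r 1 = x := by rw [h1, hr0]; exact min_eq_right hx'
  have hr2 : r 2 = x := by rw [h2, hr1]; exact min_eq_right hx'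
  have hr4 : r 4 = 1 := by
    rcases eq_or_lt_of_le hx' with h | h
    · exact h4.2 (by rw [hr1, ← h]; ring)
    · rw [h4.1 (by rw [hr1]; exact h)]
      refine min_eq_left ?_
      rw [hr1, one_le_inv_iff₀]
      constructor <;> linarith
  have hr5 : r 5 = 1 - x := by
    rw [h5, hr4, hr1, one_mul]
    exact min_eq_right (by linarith)
  have hr7 : r 7 = 1 := by
    rcases eq_or_lt_of_le hx with h | h
    · exact h7.2 (Or.inl (by rw [hr5, ← h]; ring))
    · rw [h7.1 (by rw [hr5]; nlinarith)]
      refine min_eq_left ?_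
      rw [le_div_iff₀ (by rw [hr5]; nlinarith)]
      rw [hr5]; nlinarith
  have hr8 : r 8 = x * cst := by
    rw [h8, hr7, hr5, one_mul]
    have hxx : (1 - (1 - x)) * cst = x * cst := by ring
    rw [hxx]
    exact min_eq_right (by nlinarith)
  have hr9 : r 9 = cst * x := by
    rw [h9, hr8]
    have : min 1 (x * cst) = x * cst := min_eq_right (by nlinarith)
    rw [this]; ring
  exact ⟨hr2, hr9⟩
end

section
/- Fix γ ∈ (0,1) (square-root gadget). Consider the financial system with banks {u, v2, v3, v4, w, v6, v7, v8, v9, p, v11, o, t}, external assets e u = e w = 1 − γ, e p = 1, all others 0; debt contracts of notional 1: u→v2, v2→v3, w→v6, v6→v7, v7→v8, v11→o, o→t; and CDSes of notional 1: (debtor u, creditor v4, reference v6), (debtor w, creditor v9, reference v2), (debtor p, creditor v11, reference v7). Then every clearing vector r of this system satisfies r u = r w = 1 − √γ and r o = √γ. In particular, if γ is rational but not the square of a rational, this financial system with all-rational data has the property that every clearing vector contains the irrational coordinate √γ. -/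
open Finset

abbrev Ee (γ : ℝ) : Fin 13 → ℝ :=
  fun i => if i = 0 ∨ i = 4 then 1 - γ else if i = 9 then 1 else 0

abbrev Cc : Fin 13 → Fin 13 → ℝ := fun i j =>
  if (i = 0 ∧ j = 1) ∨ (i = 1 ∧ j = 2) ∨ (i = 4 ∧ j = 5) ∨ (i = 5 ∧ j = 6) ∨
     (i = 6 ∧ j = 7) ∨ (i = 10 ∧ j = 11) ∨ (i = 11 ∧ j = 12) then 1 else 0

abbrev Dd : Fin 13 → Fin 13 → Fin 13 → ℝ := fun i j R =>
  if (i = 0 ∧ j = 3 ∧ R = 5) ∨ (i = 4 ∧ j = 8 ∧ R = 1) ∨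
     (i = 9 ∧ j = 10 ∧ R = 6) then 1 else 0

theorem hliab (r : Fin 13 → ℝ) :
    ∀ i j, liab Cc Dd r i j = Cc i j +
      ((if i = 0 ∧ j = 3 then 1 - r 5 else 0) + (if i = 4 ∧ j = 8 then 1 - r 1 else 0) +
       (if i = 9 ∧ j = 10 then 1 - r 6 else 0)) := by
  intro i j
  have hsplit : ∀ R : Fin 13, Dd i j R =
      (if i = 0 ∧ j = 3 ∧ R = 5 then (1:ℝ) else 0) +
      (if i = 4 ∧ j = 8 ∧ R = 1 then (1:ℝ) else 0) +
      (if i = 9 ∧ j = 10 ∧ R = 6 then (1:ℝ) else 0) := by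
    intro R
    show (if _ then (1:ℝ) else 0) = _
    split_ifs
    all_goals try norm_num
    all_goals try tauto
    all_goals simp_all
  have e1 : ∀ (k : Fin 13) (P : Prop) [Decidable P],
      ∑ R : Fin 13, (1 - r R) * (if P ∧ R = k then (1:ℝ) else 0)
        = if P then 1 - r k else 0 := by
    intro k P _
    by_cases h : P <;> simp [h]
  have c1 : ∀ R : Fin 13, (i = 0 ∧ j = 3 ∧ R = 5) = ((i = 0 ∧ j = 3) ∧ R = 5) := by
    intro R; rw [and_assoc]
  have c2 : ∀ R : Fin 13, (i = 4 ∧ j = 8 ∧ R = 1) = ((i = 4 ∧ j = 8) ∧ R = 1) := by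
    intro R; rw [and_assoc]
  have c3 : ∀ R : Fin 13, (i = 9 ∧ j = 10 ∧ R = 6) = ((i = 9 ∧ j = 10) ∧ R = 6) := by
    intro R; rw [and_assoc]
  simp only [liab, hsplit, c1, c2, c3, mul_add, Finset.sum_add_distrib, e1]

theorem sqrt_gadget_main (γ : ℝ) (hγ : 0 < γ) (hγ' : γ < 1) (r : Fin 13 → ℝ)
    (hr : IsClearing (Ee γ) Cc Dd r) :
    r 0 = 1 - Real.sqrt γ ∧ r 4 = 1 - Real.sqrt γ ∧ r 11 = Real.sqrt γ := by
  obtain ⟨hb, hc⟩ := hr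
  -- total liabilities
  have hT0 : totLiab Cc Dd r 0 = 2 - r 5 := by
    simp [totLiab, hliab r, Cc, Finset.sum_add_distrib, Finset.filter_eq']
    ring
  have hT1 : totLiab Cc Dd r 1 = 1 := by
    simp [totLiab, hliab r, Cc, Finset.sum_add_distrib, Finset.filter_eq']
    try ring
  have hT4 : totLiab Cc Dd r 4 = 2 - r 1 := by
    simp [totLiab, hliab r, Cc, Finset.sum_add_distrib, Finset.filter_eq']
    ring
  have hT5 : totLiab Cc Dd r 5 = 1 := by
    simp [totLiab, hliab r, Cc, Finset.sum_add_distrib, Finset.filter_eq']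
    try ring
  have hT6 : totLiab Cc Dd r 6 = 1 := by
    simp [totLiab, hliab r, Cc, Finset.sum_add_distrib, Finset.filter_eq']
    try ring
  have hT9 : totLiab Cc Dd r 9 = 1 - r 6 := by
    simp [totLiab, hliab r, Cc, Finset.sum_add_distrib, Finset.filter_eq']
    try ring
  have hT10 : totLiab Cc Dd r 10 = 1 := by
    simp [totLiab, hliab r, Cc, Finset.sum_add_distrib, Finset.filter_eq']
    try ring
  have hT11 : totLiab Cc Dd r 11 = 1 := by
    simp [totLiab, hliab r, Cc, Finset.sum_add_distrib, Finset.filter_eq']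
    try ring
  -- assets
  have hA0 : assets (Ee γ) Cc Dd r 0 = 1 - γ := by
    simp [assets, hliab r, Ee, Cc, Finset.filter_eq', Finset.sum_add_distrib, mul_add]
  have hA1 : assets (Ee γ) Cc Dd r 1 = r 0 := by
    simp [assets, hliab r, Ee, Cc, Finset.filter_eq', Finset.sum_add_distrib, mul_add]
  have hA4 : assets (Ee γ) Cc Dd r 4 = 1 - γ := by
    simp [assets, hliab r, Ee, Cc, Finset.filter_eq', Finset.sum_add_distrib, mul_add]
  have hA5 : assets (Ee γ) Cc Dd r 5 = r 4 := by
    simp [assets, hliab r, Ee, Cc, Finset.filter_eq', Finset.sum_add_distrib, mul_add]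
  have hA6 : assets (Ee γ) Cc Dd r 6 = r 5 := by
    simp [assets, hliab r, Ee, Cc, Finset.filter_eq', Finset.sum_add_distrib, mul_add]
  have hA9 : assets (Ee γ) Cc Dd r 9 = 1 := by
    simp [assets, hliab r, Ee, Cc, Finset.filter_eq', Finset.sum_add_distrib, mul_add]
  have hA10 : assets (Ee γ) Cc Dd r 10 = r 9 * (1 - r 6) := by
    simp [assets, hliab r, Ee, Cc, Finset.filter_eq', Finset.sum_add_distrib, mul_add, mul_ite]
  have hA11 : assets (Ee γ) Cc Dd r 11 = r 10 := by
    simp [assets, hliab r, Ee, Cc, Finset.filter_eq', Finset.sum_add_distrib, mul_add]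
  -- chain equalities
  have e10 : r 1 = r 0 := by
    have h := (hc 1).1 (by rw [hT1]; norm_num)
    rwa [hT1, hA1, div_one, min_eq_right (hb 0).2] at h
  have e54 : r 5 = r 4 := by
    have h := (hc 5).1 (by rw [hT5]; norm_num)
    rwa [hT5, hA5, div_one, min_eq_right (hb 4).2] at h
  have e65 : r 6 = r 5 := by
    have h := (hc 6).1 (by rw [hT6]; norm_num)
    rwa [hT6, hA6, div_one, min_eq_right (hb 5).2] at h
  have e9 : r 9 = 1 := by
    rcases eq_or_lt_of_le (sub_nonneg.mpr (hb 6).2) with h | h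
    · exact (hc 9).2 (by rw [hT9, ← h])
    · have h' := (hc 9).1 (by rw [hT9]; exact h)
      rw [hT9, hA9] at h'
      rw [h', min_eq_left]
      rw [le_div_iff₀ h]
      linarith [(hb 6).1]
  have e10' : r 10 = 1 - r 6 := by
    have h := (hc 10).1 (by rw [hT10]; norm_num)
    rw [hT10, hA10, div_one, e9, one_mul] at h
    rw [h, min_eq_right (by linarith [(hb 6).1])]
  have e11 : r 11 = 1 - r 6 := by
    have h := (hc 11).1 (by rw [hT11]; norm_num)
    rw [hT11, hA11, div_one, e10'] at h
    rw [h, min_eq_right (by linarith [(hb 6).1])]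
  have h2x : (0:ℝ) < 2 - r 5 := by linarith [(hb 5).2]
  have h2y : (0:ℝ) < 2 - r 1 := by linarith [(hb 1).2]
  have h0 : r 0 = (1 - γ) / (2 - r 5) := by
    have h := (hc 0).1 (by rw [hT0]; exact h2x)
    rw [hT0, hA0] at h
    rw [h, min_eq_right]
    rw [div_le_one h2x]
    linarith [(hb 5).2]
  have h4 : r 4 = (1 - γ) / (2 - r 1) := by
    have h := (hc 4).1 (by rw [hT4]; exact h2y)
    rw [hT4, hA4] at h
    rw [h, min_eq_right]
    rw [div_le_one h2y]
    linarith [(hb 1).2]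
  rw [e54] at h0
  rw [e10] at h4
  have h2x' : (0:ℝ) < 2 - r 4 := by linarith [(hb 4).2]
  have h2y' : (0:ℝ) < 2 - r 0 := by linarith [(hb 0).2]
  have hx' : r 0 * (2 - r 4) = 1 - γ := by
    rw [eq_div_iff h2x'.ne'] at h0; exact h0
  have hy' : r 4 * (2 - r 0) = 1 - γ := by
    rw [eq_div_iff h2y'.ne'] at h4; exact h4
  have heq : r 0 = r 4 := by linear_combination (hx' - hy') / 2
  have hx'' : r 0 * (2 - r 0) = 1 - γ := by rw [← heq] at hx'; exact hx'
  have hsq : (1 - r 0) ^ 2 = γ := by linear_combination -hx''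
  have h1r : (0:ℝ) ≤ 1 - r 0 := by linarith [(hb 0).2]
  have hroot : Real.sqrt γ = 1 - r 0 := by rw [← hsq, Real.sqrt_sq h1r]
  refine ⟨by linarith, by linarith, ?_⟩
  rw [e11, e65, e54, ← heq]
  linarith

/-- Square-root gadget: banks `u=0, v2=1, v3=2, v4=3, w=4, v6=5, v7=6, v8=7, v9=8,
p=9, v11=10, o=11, t=12`; external assets `1-γ` at `u` and `w`, `1` at `p`; unit debt
contracts `u→v2`, `v2→v3`, `w→v6`, `v6→v7`, `v7→v8`, `v11→o`, `o→t`; unit CDSes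
`(u, v4, v6)`, `(w, v9, v2)`, `(p, v11, v7)`.  Every clearing vector has
`r u = r w = 1 - √γ` and `r o = √γ`; in particular, if `γ` is rational but not the
square of a rational, every clearing vector contains the irrational coordinate `√γ`. -/
theorem sqrt_gadget (γ : ℝ) (hγ : 0 < γ) (hγ' : γ < 1) :
    (∀ r : Fin 13 → ℝ,
      IsClearing
        (fun i => if i = 0 ∨ i = 4 then 1 - γ else if i = 9 then 1 else 0)
        (fun i j =>
          if (i = 0 ∧ j = 1) ∨ (i = 1 ∧ j = 2) ∨ (i = 4 ∧ j = 5) ∨ (i = 5 ∧ j = 6) ∨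
             (i = 6 ∧ j = 7) ∨ (i = 10 ∧ j = 11) ∨ (i = 11 ∧ j = 12) then 1 else 0)
        (fun i j R =>
          if (i = 0 ∧ j = 3 ∧ R = 5) ∨ (i = 4 ∧ j = 8 ∧ R = 1) ∨
             (i = 9 ∧ j = 10 ∧ R = 6) then 1 else 0) r →
      r 0 = 1 - Real.sqrt γ ∧ r 4 = 1 - Real.sqrt γ ∧ r 11 = Real.sqrt γ) ∧
    (((∃ q : ℚ, γ = q) ∧ ¬ ∃ q : ℚ, γ = (q : ℝ) ^ 2) →
      ∀ r : Fin 13 → ℝ,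
        IsClearing
          (fun i => if i = 0 ∨ i = 4 then 1 - γ else if i = 9 then 1 else 0)
          (fun i j =>
            if (i = 0 ∧ j = 1) ∨ (i = 1 ∧ j = 2) ∨ (i = 4 ∧ j = 5) ∨ (i = 5 ∧ j = 6) ∨
               (i = 6 ∧ j = 7) ∨ (i = 10 ∧ j = 11) ∨ (i = 11 ∧ j = 12) then 1 else 0)
          (fun i j R =>
            if (i = 0 ∧ j = 3 ∧ R = 5) ∨ (i = 4 ∧ j = 8 ∧ R = 1) ∨
               (i = 9 ∧ j = 10 ∧ R = 6) then 1 else 0) r →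
        ∃ i, r i = Real.sqrt γ ∧ Irrational (r i)) := by
  constructor
  · exact fun r hr => sqrt_gadget_main γ hγ hγ' r hr
  · rintro ⟨⟨q, hq⟩, hns⟩ r hr
    obtain ⟨h0, h4, h11⟩ := sqrt_gadget_main γ hγ hγ' r hr
    refine ⟨11, h11, ?_⟩
    rw [h11]
    rintro ⟨a, ha⟩
    exact hns ⟨a, by rw [← Real.sq_sqrt hγ.le, ← ha]⟩
end

section
/- For every natural number k ≥ 1 there exists a financial system with at most 25·k + 5 banks, all of whose external assets and notionals lie in {0, 1/2, 1}, such that every clearing vector of the system has some coordinate equal to (1/2)^(2^k). In particular, financial systems of size linear in k can force clearing recovery rates whose binary representation requires 2^k bits. -/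
open Finset

/-! ### Construction: a chain of squaring gadgets.

Banks `0..5k+1`. Bank `0` is a sink (no liabilities). Bank `1` has external
assets `1/2` and owes `1` to the sink, so its recovery rate is `1/2`.
For each `t < k`, the gadget `5t+2 .. 5t+6` squares the rate of bank `5t+1`:
* `5t+2` (source, e = 1) pays `(1 - x)` to `5t+3` via a CDS referencing `5t+1`;
* `5t+3` owes `1` to the sink, so its rate is `1 - x`;
* `5t+4` (source, e = 1) pays `x` to `5t+5` via a CDS referencing `5t+3`;
* `5t+5` owes `x` to `5t+6` (CDS ref `5t+3`) and `1-x` to the sink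
  (CDS ref `5t+1`), total liability `1`, assets `x`, so its rate is `x`;
* `5t+6` owes `1` to the sink and receives `x * x`, so its rate is `x^2`. -/

/-- The condition under which a CDS notional equals 1 (on bank values). -/
def cdsCond (i j R : ℕ) : Prop :=
  (i % 5 = 2 ∧ j = i + 1 ∧ R + 1 = i)
  ∨ (i % 5 = 4 ∧ j = i + 1 ∧ R + 1 = i)
  ∨ (i % 5 = 0 ∧ i ≠ 0 ∧ j = i + 1 ∧ R + 2 = i)
  ∨ (i % 5 = 0 ∧ i ≠ 0 ∧ j = 0 ∧ R + 4 = i)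

instance (i j R : ℕ) : Decidable (cdsCond i j R) := by
  unfold cdsCond; exact inferInstance

noncomputable def eF (k : ℕ) (i : Fin (5*k+2)) : ℝ :=
  if i.1 = 1 then 1/2 else if i.1 % 5 = 2 ∨ i.1 % 5 = 4 then 1 else 0

noncomputable def cF (k : ℕ) (i j : Fin (5*k+2)) : ℝ :=
  if j.1 = 0 ∧ (i.1 % 5 = 1 ∨ i.1 % 5 = 3) then 1 else 0

noncomputable def cdsF (k : ℕ) (i j R : Fin (5*k+2)) : ℝ :=
  if cdsCond i.1 j.1 R.1 then 1 else 0

/-- Summing a function supported on a single index. -/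
lemma sum_pick {n m : ℕ} (hm : m < n) (f : Fin n → ℝ) :
    ∑ j : Fin n, (if j.1 = m then f j else 0) = f ⟨m, hm⟩ := by
  rw [Finset.sum_eq_single ⟨m, hm⟩]
  · simp
  · intro b _ hb
    exact if_neg fun h => hb (Fin.ext h)
  · intro h; exact absurd (Finset.mem_univ _) h

lemma sum_cds_pick (k : ℕ) (r : Fin (5*k+2) → ℝ) (i j : Fin (5*k+2)) (ρ : ℕ)
    (hρ : ρ < 5*k+2) (hiff : ∀ R : ℕ, R < 5*k+2 → (cdsCond i.1 j.1 R ↔ R = ρ)) :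
    ∑ R : Fin (5*k+2), (1 - r R) * cdsF k i j R = 1 - r ⟨ρ, hρ⟩ := by
  have h1 : ∀ R : Fin (5*k+2), (1 - r R) * cdsF k i j R
      = if R.1 = ρ then 1 - r R else 0 := by
    intro R
    unfold cdsF
    by_cases h : R.1 = ρ
    · rw [if_pos ((hiff R.1 R.2).2 h), if_pos h, mul_one]
    · rw [if_neg (fun hc => h ((hiff R.1 R.2).1 hc)), if_neg h, mul_zero]
  rw [Finset.sum_congr rfl fun R _ => h1 R, sum_pick hρ]

lemma sum_cds_zero (k : ℕ) (r : Fin (5*k+2) → ℝ) (i j : Fin (5*k+2))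
    (hno : ∀ R : ℕ, R < 5*k+2 → ¬ cdsCond i.1 j.1 R) :
    ∑ R : Fin (5*k+2), (1 - r R) * cdsF k i j R = 0 := by
  have h1 : ∀ R : Fin (5*k+2), (1 - r R) * cdsF k i j R = 0 := by
    intro R
    unfold cdsF
    rw [if_neg (hno R.1 R.2), mul_zero]
  rw [Finset.sum_congr rfl fun R _ => h1 R, Finset.sum_const_zero]

/-- Liabilities of banks owing only a unit debt contract to the sink. -/
lemma liab_debt (k m : ℕ) (hm : m < 5*k+2) (hmod : m % 5 = 1 ∨ m % 5 = 3)
    (r : Fin (5*k+2) → ℝ) (j : Fin (5*k+2)) :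
    liab (cF k) (cdsF k) r ⟨m, hm⟩ j = if j.1 = 0 then 1 else 0 := by
  unfold liab
  rw [sum_cds_zero k r _ j (by simp only [Fin.val_mk]; unfold cdsCond; omega), add_zero]
  unfold cF
  by_cases hj : j.1 = 0
  · rw [if_pos ⟨hj, hmod⟩, if_pos hj]
  · rw [if_neg (by tauto), if_neg hj]

lemma totLiab_debt (k m : ℕ) (hm : m < 5*k+2) (hmod : m % 5 = 1 ∨ m % 5 = 3)
    (r : Fin (5*k+2) → ℝ) :
    totLiab (cF k) (cdsF k) r ⟨m, hm⟩ = 1 := by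
  unfold totLiab
  rw [Finset.sum_congr rfl fun j _ => liab_debt k m hm hmod r j,
    sum_pick (show 0 < 5*k+2 by omega) (fun _ => (1:ℝ))]

/-- Liabilities of the first source in a gadget. -/
lemma liab_SN (k t : ℕ) (ht : t < k) (r : Fin (5*k+2) → ℝ) (j : Fin (5*k+2)) :
    liab (cF k) (cdsF k) r ⟨5*t+2, by omega⟩ j
      = if j.1 = 5*t+3 then 1 - r ⟨5*t+1, by omega⟩ else 0 := by
  unfold liab
  rw [show cF k ⟨5*t+2, by omega⟩ j = 0 from if_neg (by
    simp only [Fin.val_mk]; omega), zero_add]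
  by_cases hj : j.1 = 5*t+3
  · rw [if_pos hj, sum_cds_pick k r _ j (5*t+1) (by omega)
      (by simp only [Fin.val_mk, hj]; unfold cdsCond; omega)]
  · rw [if_neg hj, sum_cds_zero k r _ j (by
      simp only [Fin.val_mk]; unfold cdsCond; omega)]

lemma totLiab_SN (k t : ℕ) (ht : t < k) (r : Fin (5*k+2) → ℝ) :
    totLiab (cF k) (cdsF k) r ⟨5*t+2, by omega⟩ = 1 - r ⟨5*t+1, by omega⟩ := by
  unfold totLiab
  rw [Finset.sum_congr rfl fun j _ => liab_SN k t ht r j,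
    sum_pick (show 5*t+3 < 5*k+2 by omega) (fun _ => 1 - r ⟨5*t+1, by omega⟩)]

/-- Liabilities of the second source in a gadget. -/
lemma liab_SA (k t : ℕ) (ht : t < k) (r : Fin (5*k+2) → ℝ) (j : Fin (5*k+2)) :
    liab (cF k) (cdsF k) r ⟨5*t+4, by omega⟩ j
      = if j.1 = 5*t+5 then 1 - r ⟨5*t+3, by omega⟩ else 0 := by
  unfold liab
  rw [show cF k ⟨5*t+4, by omega⟩ j = 0 from if_neg (by
    simp only [Fin.val_mk]; omega), zero_add]
  by_cases hj : j.1 = 5*t+5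
  · rw [if_pos hj, sum_cds_pick k r _ j (5*t+3) (by omega)
      (by simp only [Fin.val_mk, hj]; unfold cdsCond; omega)]
  · rw [if_neg hj, sum_cds_zero k r _ j (by
      simp only [Fin.val_mk]; unfold cdsCond; omega)]

lemma totLiab_SA (k t : ℕ) (ht : t < k) (r : Fin (5*k+2) → ℝ) :
    totLiab (cF k) (cdsF k) r ⟨5*t+4, by omega⟩ = 1 - r ⟨5*t+3, by omega⟩ := by
  unfold totLiab
  rw [Finset.sum_congr rfl fun j _ => liab_SA k t ht r j,
    sum_pick (show 5*t+5 < 5*k+2 by omega) (fun _ => 1 - r ⟨5*t+3, by omega⟩)]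

/-- Liabilities of the multiplier bank `5t+5`. -/
lemma liab_A (k t : ℕ) (ht : t < k) (r : Fin (5*k+2) → ℝ) (j : Fin (5*k+2)) :
    liab (cF k) (cdsF k) r ⟨5*t+5, by omega⟩ j
      = (if j.1 = 5*t+6 then 1 - r ⟨5*t+3, by omega⟩ else 0)
        + (if j.1 = 0 then 1 - r ⟨5*t+1, by omega⟩ else 0) := by
  unfold liab
  rw [show cF k ⟨5*t+5, by omega⟩ j = 0 from if_neg (by
    simp only [Fin.val_mk]; omega), zero_add]
  by_cases hj : j.1 = 5*t+6
  · rw [if_pos hj, if_neg (by omega), add_zero,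
      sum_cds_pick k r _ j (5*t+3) (by omega)
        (by simp only [Fin.val_mk, hj]; unfold cdsCond; omega)]
  · rw [if_neg hj]
    by_cases hj0 : j.1 = 0
    · rw [if_pos hj0, zero_add,
        sum_cds_pick k r _ j (5*t+1) (by omega)
          (by simp only [Fin.val_mk, hj0]; unfold cdsCond; omega)]
    · rw [if_neg hj0, add_zero, sum_cds_zero k r _ j (by
        simp only [Fin.val_mk]; unfold cdsCond; omega)]

lemma totLiab_A (k t : ℕ) (ht : t < k) (r : Fin (5*k+2) → ℝ) :
    totLiab (cF k) (cdsF k) r ⟨5*t+5, by omega⟩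
      = (1 - r ⟨5*t+3, by omega⟩) + (1 - r ⟨5*t+1, by omega⟩) := by
  unfold totLiab
  rw [Finset.sum_congr rfl fun j _ => liab_A k t ht r j, Finset.sum_add_distrib,
    sum_pick (show 5*t+6 < 5*k+2 by omega) (fun _ => 1 - r ⟨5*t+3, by omega⟩),
    sum_pick (show 0 < 5*k+2 by omega) (fun _ => 1 - r ⟨5*t+1, by omega⟩)]

/-- Generic incoming-payments computation: if nobody owes anything to `i`,
the assets of `i` are its external assets. -/
lemma assets_no_in (k m : ℕ) (hm : m < 5*k+2)
    (hc : m ≠ 0) (hno : ∀ j R : ℕ, j < 5*k+2 → ¬ cdsCond j m R)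
    (r : Fin (5*k+2) → ℝ) :
    assets (eF k) (cF k) (cdsF k) r ⟨m, hm⟩ = eF k ⟨m, hm⟩ := by
  unfold assets
  have h1 : ∀ j : Fin (5*k+2), r j * liab (cF k) (cdsF k) r j ⟨m, hm⟩ = 0 := by
    intro j
    unfold liab
    rw [show cF k j ⟨m, hm⟩ = 0 from if_neg (by simp only [Fin.val_mk]; omega),
      zero_add, sum_cds_zero k r j _ (by
        simp only [Fin.val_mk]; exact fun R _ => hno j.1 R j.2), mul_zero]
  rw [Finset.sum_congr rfl fun j _ => h1 j, Finset.sum_const_zero, add_zero]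

/-- Generic incoming-payments computation: a single incoming CDS payment. -/
lemma assets_one_in (k m p ρ : ℕ) (hm : m < 5*k+2) (hp : p < 5*k+2) (hρ : ρ < 5*k+2)
    (hc : m ≠ 0)
    (hiff : ∀ j R : ℕ, j < 5*k+2 → R < 5*k+2 → (cdsCond j m R ↔ (j = p ∧ R = ρ)))
    (r : Fin (5*k+2) → ℝ) :
    assets (eF k) (cF k) (cdsF k) r ⟨m, hm⟩
      = eF k ⟨m, hm⟩ + r ⟨p, hp⟩ * (1 - r ⟨ρ, hρ⟩) := by
  unfold assets
  have h1 : ∀ j : Fin (5*k+2), r j * liab (cF k) (cdsF k) r j ⟨m, hm⟩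
      = if j.1 = p then r j * (1 - r ⟨ρ, hρ⟩) else 0 := by
    intro j
    unfold liab
    rw [show cF k j ⟨m, hm⟩ = 0 from if_neg (by simp only [Fin.val_mk]; omega),
      zero_add]
    by_cases hj : j.1 = p
    · rw [if_pos hj, sum_cds_pick k r j _ ρ hρ (by
        intro R hR
        simp only [Fin.val_mk]
        rw [hiff j.1 R j.2 hR]
        omega)]
    · rw [if_neg hj, sum_cds_zero k r j _ (by
        intro R hR
        simp only [Fin.val_mk]
        rw [hiff j.1 R j.2 hR]
        omega), mul_zero]
  rw [Finset.sum_congr rfl fun j _ => h1 j,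
    sum_pick hp (fun j => r j * (1 - r ⟨ρ, hρ⟩))]

lemma eF_val (k m : ℕ) (hm : m < 5*k+2) :
    eF k ⟨m, hm⟩ = if m = 1 then 1/2 else if m % 5 = 2 ∨ m % 5 = 4 then 1 else 0 := rfl

lemma assets_X0 (k : ℕ) (hk : 1 ≤ k) (r : Fin (5*k+2) → ℝ) :
    assets (eF k) (cF k) (cdsF k) r ⟨1, by omega⟩ = 1/2 := by
  rw [assets_no_in k 1 (by omega) (by omega)
      (by intro j R hj; unfold cdsCond; omega) r, eF_val]
  norm_num

lemma assets_src (k m : ℕ) (hm : m < 5*k+2) (hmod : m % 5 = 2 ∨ m % 5 = 4)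
    (r : Fin (5*k+2) → ℝ) :
    assets (eF k) (cF k) (cdsF k) r ⟨m, hm⟩ = 1 := by
  rw [assets_no_in k m hm (by omega)
      (by intro j R hj; unfold cdsCond; omega) r, eF_val]
  rw [if_neg (by omega), if_pos hmod]

lemma assets_N (k t : ℕ) (ht : t < k) (r : Fin (5*k+2) → ℝ) :
    assets (eF k) (cF k) (cdsF k) r ⟨5*t+3, by omega⟩
      = r ⟨5*t+2, by omega⟩ * (1 - r ⟨5*t+1, by omega⟩) := by
  rw [assets_one_in k (5*t+3) (5*t+2) (5*t+1) (by omega) (by omega) (by omega)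
      (by omega) (by intro j R hj hR; unfold cdsCond; omega) r, eF_val]
  rw [if_neg (by omega), if_neg (by omega), zero_add]

lemma assets_A (k t : ℕ) (ht : t < k) (r : Fin (5*k+2) → ℝ) :
    assets (eF k) (cF k) (cdsF k) r ⟨5*t+5, by omega⟩
      = r ⟨5*t+4, by omega⟩ * (1 - r ⟨5*t+3, by omega⟩) := by
  rw [assets_one_in k (5*t+5) (5*t+4) (5*t+3) (by omega) (by omega) (by omega)
      (by omega) (by intro j R hj hR; unfold cdsCond; omega) r, eF_val]
  rw [if_neg (by omega), if_neg (by omega), zero_add]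

lemma assets_P (k t : ℕ) (ht : t < k) (r : Fin (5*k+2) → ℝ) :
    assets (eF k) (cF k) (cdsF k) r ⟨5*t+6, by omega⟩
      = r ⟨5*t+5, by omega⟩ * (1 - r ⟨5*t+3, by omega⟩) := by
  rw [assets_one_in k (5*t+6) (5*t+5) (5*t+3) (by omega) (by omega) (by omega)
      (by omega) (by intro j R hj hR; unfold cdsCond; omega) r, eF_val]
  rw [if_neg (by omega), if_neg (by omega), zero_add]

/-- The base bank `1` has recovery rate `1/2` in any clearing vector. -/
lemma rate_base (k : ℕ) (hk : 1 ≤ k) (r : Fin (5*k+2) → ℝ)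
    (hr : IsClearing (eF k) (cF k) (cdsF k) r) :
    r ⟨1, by omega⟩ = 1/2 := by
  have h1 := (hr.2 ⟨1, by omega⟩).1
  rw [totLiab_debt k 1 (by omega) (by omega) r, assets_X0 k hk r] at h1
  rw [h1 one_pos]
  norm_num

/-- The squaring step: bank `5t+6` has the square of the rate of bank `5t+1`. -/
lemma rate_step (k t : ℕ) (ht : t < k) (r : Fin (5*k+2) → ℝ)
    (hr : IsClearing (eF k) (cF k) (cdsF k) r)
    (hx0 : 0 < r ⟨5*t+1, by omega⟩) (hx1 : r ⟨5*t+1, by omega⟩ ≤ 1/2) :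
    r ⟨5*t+6, by omega⟩ = r ⟨5*t+1, by omega⟩ * r ⟨5*t+1, by omega⟩ := by
  obtain ⟨hb, hcl⟩ := hr
  -- the source `5t+2` is fully solvent
  have hSN : r ⟨5*t+2, by omega⟩ = 1 := by
    have h1 := (hcl ⟨5*t+2, by omega⟩).1
    rw [totLiab_SN k t ht r, assets_src k (5*t+2) (by omega) (by omega) r] at h1
    rw [h1 (by linarith), min_eq_left]
    rw [le_div_iff₀ (by linarith)]
    linarith
  -- the negation bank `5t+3`
  have hN : r ⟨5*t+3, by omega⟩ = 1 - r ⟨5*t+1, by omega⟩ := by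
    have h1 := (hcl ⟨5*t+3, by omega⟩).1
    rw [totLiab_debt k (5*t+3) (by omega) (by omega) r, assets_N k t ht r, hSN] at h1
    rw [h1 one_pos, div_one, one_mul, min_eq_right]
    linarith
  -- the source `5t+4` is fully solvent
  have hSA : r ⟨5*t+4, by omega⟩ = 1 := by
    have h1 := (hcl ⟨5*t+4, by omega⟩).1
    rw [totLiab_SA k t ht r, assets_src k (5*t+4) (by omega) (by omega) r, hN] at h1
    rw [h1 (by linarith), min_eq_left]
    rw [le_div_iff₀ (by linarith)]
    linarith
  -- the multiplier bank `5t+5`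
  have hA : r ⟨5*t+5, by omega⟩ = r ⟨5*t+1, by omega⟩ := by
    have h1 := (hcl ⟨5*t+5, by omega⟩).1
    rw [totLiab_A k t ht r, assets_A k t ht r, hSA, hN] at h1
    have h2 : (1 - (1 - r ⟨5*t+1, by omega⟩)) + (1 - r ⟨5*t+1, by omega⟩) = 1 := by ring
    rw [h2] at h1
    rw [h1 one_pos, div_one, one_mul]
    have h3 : 1 - (1 - r ⟨5*t+1, by omega⟩) = r ⟨5*t+1, by omega⟩ := by ring
    rw [h3, min_eq_right]
    linarith
  -- the result bank `5t+6`
  have h1 := (hcl ⟨5*t+6, by omega⟩).1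
  rw [totLiab_debt k (5*t+6) (by omega) (by omega) r, assets_P k t ht r, hA, hN] at h1
  rw [h1 one_pos, div_one]
  have h3 : 1 - (1 - r ⟨5*t+1, by omega⟩) = r ⟨5*t+1, by omega⟩ := by ring
  rw [h3, min_eq_right]
  nlinarith

/-- Every clearing vector of the constructed system has
`r (5t+1) = (1/2)^(2^t)` for all `t ≤ k`. -/
lemma rate_chain (k : ℕ) (hk : 1 ≤ k) (r : Fin (5*k+2) → ℝ)
    (hr : IsClearing (eF k) (cF k) (cdsF k) r) :
    ∀ t (_ : t ≤ k), r ⟨5*t+1, by omega⟩ = (1/2 : ℝ) ^ (2^t) := by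
  intro t
  induction t with
  | zero =>
    intro _
    have h := rate_base k hk r hr
    rw [show ((⟨5*0+1, by omega⟩ : Fin (5*k+2))) = ⟨1, by omega⟩ from Fin.ext (by
      simp only [Fin.val_mk]), h]
    norm_num
  | succ t ih =>
    intro hle
    have ht : t < k := by omega
    have hx := ih (by omega)
    have hx2 : r ⟨5*t+1, by omega⟩ ≤ 1/2 := by
      rw [hx]
      calc ((1:ℝ)/2) ^ (2^t) ≤ (1/2) ^ 1 :=
            pow_le_pow_of_le_one (by norm_num) (by norm_num) Nat.one_le_two_pow
        _ = 1/2 := pow_one _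
    have hstep := rate_step k t ht r hr (by rw [hx]; positivity) hx2
    rw [show ((⟨5*(t+1)+1, by omega⟩ : Fin (5*k+2))) = ⟨5*t+6, by omega⟩ from
      Fin.ext (by simp only [Fin.val_mk]; ring), hstep, hx, ← pow_add]
    congr 1
    rw [pow_succ]
    omega

/-- For every `k ≥ 1` there is a financial system with at most `25k + 5` banks, all of
whose external assets and notionals lie in `{0, 1/2, 1}`, such that every clearing
vector has some coordinate equal to `(1/2)^(2^k)`. -/
theorem small_system_doubly_exponential_rate (k : ℕ) (hk : 1 ≤ k) :
    ∃ (n : ℕ) (e : Fin n → ℝ) (c : Fin n → Fin n → ℝ)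
      (cds : Fin n → Fin n → Fin n → ℝ),
      n ≤ 25 * k + 5 ∧
      IsFinSys e c cds ∧
      (∀ i, e i = 0 ∨ e i = 1/2 ∨ e i = 1) ∧
      (∀ i j, c i j = 0 ∨ c i j = 1/2 ∨ c i j = 1) ∧
      (∀ i j R, cds i j R = 0 ∨ cds i j R = 1/2 ∨ cds i j R = 1) ∧
      ∀ r : Fin n → ℝ, IsClearing e c cds r →
        ∃ i, r i = (1/2 : ℝ) ^ (2 ^ k) := by
  refine ⟨5*k+2, eF k, cF k, cdsF k, by omega, ?_, ?_, ?_, ?_, ?_⟩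
  · refine ⟨?_, ?_, ?_, ?_, ?_⟩
    · intro i; unfold eF; split_ifs <;> norm_num
    · intro i j; unfold cF; split_ifs <;> norm_num
    · intro i; unfold cF; rw [if_neg]; omega
    · intro i j R; unfold cdsF; split_ifs <;> norm_num
    · intro i j R h
      unfold cdsF
      rw [if_neg]
      intro hc
      apply h
      unfold cdsCond at hc
      refine ⟨fun he => ?_, fun he => ?_, fun he => ?_⟩ <;>
        (rw [Fin.ext_iff] at he; omega)
  · intro i; unfold eF; split_ifs <;> norm_num
  · intro i j; unfold cF; split_ifs <;> norm_num
  · intro i j R; unfold cdsF; split_ifs <;> norm_num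
  · intro r hr
    exact ⟨⟨5*k+1, by omega⟩, rate_chain k hk r hr k le_rfl⟩
end

section
/- For every natural number d and every real x with 0 ≤ x ≤ 1, setting t = 1/2^(2^d + 1), the following hold (real-exponent powers): (i) (((t·x)^(1/2^d)) · 2)^(2^d) · 2 = x; (ii) all intermediate values lie in [0,1], namely 0 ≤ t·x ≤ 1, 0 ≤ ((t·x)^(1/2^d)) · 2 ≤ 1, and 0 ≤ (((t·x)^(1/2^d)) · 2)^(2^d) ≤ 1. (This identity allows dividing a t-scaled signal by t using only square roots, squaring, and doubling, in place of a division gate.) -/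
/-! Writing `s = (t x)^(1/2^d) · 2`, the root and the power cancel, so `s^(2^d) = 2^(2^d) t x = x / 2`.
Hence the identity, `s^(2^d) ∈ [0, 1/2]`, and `s ≤ 1` because a nonnegative number whose power is at
most `1` is itself at most `1`. -/

theorem rpow_one_div_mul_two_pow {y : ℝ} (hy : 0 ≤ y) {n : ℕ} (hn : n ≠ 0) :
    ((1 / 2 ^ (n + 1) * y) ^ ((1 : ℝ) / n) * 2) ^ n = y / 2 := by
  rw [mul_pow, one_div (n : ℝ), Real.rpow_inv_natCast_pow (by positivity) hn, pow_succ]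
  field_simp

/-- Dividing a `t`-scaled signal by `t = 1/2^(2^d + 1)` using only `2^d`-fold square
roots (a real power with exponent `1/2^d`), doubling, `2^d`-fold squaring, and a final
doubling: the identity holds and all intermediate values stay in `[0,1]`. -/
theorem sqrt_simulates_division (d : ℕ) (x : ℝ) (hx0 : 0 ≤ x) (hx1 : x ≤ 1) :
    let t : ℝ := 1 / 2 ^ (2 ^ d + 1)
    ((((t * x) ^ ((1 : ℝ) / 2 ^ d)) * 2) ^ (2 ^ d : ℕ) * 2 = x) ∧
    (0 ≤ t * x ∧ t * x ≤ 1) ∧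
    (0 ≤ ((t * x) ^ ((1 : ℝ) / 2 ^ d)) * 2 ∧ ((t * x) ^ ((1 : ℝ) / 2 ^ d)) * 2 ≤ 1) ∧
    (0 ≤ (((t * x) ^ ((1 : ℝ) / 2 ^ d)) * 2) ^ (2 ^ d : ℕ) ∧
      (((t * x) ^ ((1 : ℝ) / 2 ^ d)) * 2) ^ (2 ^ d : ℕ) ≤ 1) := by
  intro t
  have hn : 2 ^ d ≠ 0 := by positivity
  have ht1 : t ≤ 1 := div_le_one_of_le₀ (one_le_pow₀ one_le_two) (by positivity)
  have hs_pow : ((t * x) ^ ((1 : ℝ) / 2 ^ d) * 2) ^ 2 ^ d = x / 2 := by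
    simpa only [t, Nat.cast_pow, Nat.cast_ofNat] using rpow_one_div_mul_two_pow hx0 hn
  have hs0 : 0 ≤ (t * x) ^ ((1 : ℝ) / 2 ^ d) * 2 := by positivity
  have hs1 : (t * x) ^ ((1 : ℝ) / 2 ^ d) * 2 ≤ 1 :=
    (pow_le_one_iff_of_nonneg hs0 hn).mp (by linarith)
  refine ⟨by rw [hs_pow]; ring, ⟨by positivity, mul_le_one₀ ht1 hx0 hx1⟩, ⟨hs0, hs1⟩, ?_⟩
  rw [hs_pow]
  constructor <;> linarith
end
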